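/- arXiv:2307.00496 — 8 statements merged into one kernel-verified Lean document; each statement's English description precedes it below -/
import Mathlib

section
/- Let Γ be a Fuchsian group and g ∈ Γ. Then g is reciprocal in Γ (i.e. there exists h ∈ Γ with h*g*h⁻¹ = g⁻¹) if and only if g is strongly reciprocal in Γ (i.e. there exists h ∈ Γ with h² = 1 and h*g*h⁻¹ = g⁻¹). Moreover, if g is reciprocal in Γ and g² ≠ 1, then every reciprocator of g is an involution: every h ∈ Γ with h*g*h⁻¹ = g⁻¹ satisfies h² = 1. -/
noncomputable section

/-- `SL(2,ℝ)`: 2×2 real matrices of determinant 1. -/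
abbrev SL2R := Matrix.SpecialLinearGroup (Fin 2) ℝ

/-- The topology on `SL(2,ℝ)` induced from the matrix topology. -/
instance : TopologicalSpace SL2R :=
  TopologicalSpace.induced (fun A => (A : Matrix (Fin 2) (Fin 2) ℝ)) inferInstance

/-- `PSL(2,ℝ)`: the quotient of `SL(2,ℝ)` by its center `{±I}`,
with the quotient topology. -/
abbrev PSL2R := SL2R ⧸ Subgroup.center SL2R

/-- The projection `SL(2,ℝ) → PSL(2,ℝ)`. -/
def psl (A : SL2R) : PSL2R := QuotientGroup.mk A

/-- An element of `PSL(2,ℝ)` is hyperbolic if a lift in `SL(2,ℝ)` has `|trace| > 2`. -/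
def IsHyperbolic (g : PSL2R) : Prop :=
  ∃ A : SL2R, psl A = g ∧ 2 < |Matrix.trace (A : Matrix (Fin 2) (Fin 2) ℝ)|

/-- The matrix `S = [[0,-1],[1,0]]` as an element of `SL(2,ℝ)`. -/
def Sm : SL2R := ⟨!![0, -1; 1, 0], by norm_num [Matrix.det_fin_two_of]⟩

/-- The matrix `T = [[1, 2cos(π/p)],[0,1]]` as an element of `SL(2,ℝ)`. -/
def Tm (p : ℕ) : SL2R := ⟨!![1, 2 * Real.cos (Real.pi / p); 0, 1], by
  norm_num [Matrix.det_fin_two_of]⟩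

/-- `ι`, the image of `S` in `PSL(2,ℝ)`. -/
def iota : PSL2R := psl Sm

/-- `α_p`, the image of `T` in `PSL(2,ℝ)`. -/
def alphaP (p : ℕ) : PSL2R := psl (Tm p)

/-- The Hecke group `Γ_p`, generated by `ι` and `α_p`. -/
def Hecke (p : ℕ) : Subgroup PSL2R := Subgroup.closure {iota, alphaP p}

/-- `γ_p = ι·α_p`, the image of `S·T = [[0,-1],[1, 2cos(π/p)]]`. -/
def gammaP (p : ℕ) : PSL2R := psl (Sm * Tm p)

/-- The fixed-point ratio `θ_A ∈ ℝ ∪ {∞}` of `A = [[a,b],[c,d]] ∈ SL(2,ℝ)`: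
`(b-c)/(a-d)` if `a ≠ d`; `∞` if `a = d` and `b ≠ c`; `1` if `a = d` and `b = c`. -/
def theta (A : SL2R) : WithTop ℝ :=
  if A.1 0 0 = A.1 1 1 then
    (if A.1 0 1 = A.1 1 0 then ((1 : ℝ) : WithTop ℝ) else ⊤)
  else (((A.1 0 1 - A.1 1 0) / (A.1 0 0 - A.1 1 1) : ℝ) : WithTop ℝ)

private def negI : SL2R := ⟨-1, by simpa using Matrix.det_neg (1 : Matrix (Fin 2) (Fin 2) ℝ)⟩

private lemma negI_inv : negI⁻¹ = negI := by
  apply inv_eq_of_mul_eq_one_right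
  apply Subtype.ext
  show ((-1 : Matrix (Fin 2) (Fin 2) ℝ)) * (-1) = 1
  simp

private lemma coe_center {X : SL2R} (h : X ∈ Subgroup.center SL2R) :
    X.1 = 1 ∨ X.1 = -1 := by
  obtain ⟨r, hr, hs⟩ := Matrix.SpecialLinearGroup.mem_center_iff.mp h
  have hr' : r * r = 1 := by
    have : r ^ 2 = 1 := by simpa using hr
    rw [sq] at this; exact this
  rcases mul_self_eq_one_iff.mp hr' with rfl | rfl
  · left; rw [← hs, map_one]
  · right; rw [← hs, map_neg, map_one]

private lemma mem_center_of_coe {X : SL2R} (h : X.1 = 1 ∨ X.1 = -1) :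
    X ∈ Subgroup.center SL2R := by
  apply Matrix.SpecialLinearGroup.mem_center_iff.mpr
  rcases h with h | h
  · exact ⟨1, by norm_num, by rw [h, map_one]⟩
  · exact ⟨-1, by norm_num, by rw [h, map_neg, map_one]⟩

private lemma psl_sq_one {X : SL2R} (h : X.1 * X.1 = 1 ∨ X.1 * X.1 = -1) :
    (QuotientGroup.mk X : PSL2R) ^ 2 = 1 := by
  rw [sq, ← QuotientGroup.mk_mul, QuotientGroup.eq_one_iff]
  apply mem_center_of_coe
  simpa using h

private lemma core (A B : SL2R)
    (h : B.1 * A.1 = (A⁻¹).1 * B.1 ∨ B.1 * A.1 = -((A⁻¹).1 * B.1)) :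
    B.1 * B.1 = -1 ∨ (A.1 * A.1 = 1 ∨ A.1 * A.1 = -1) := by
  have hAdet : A.1 0 0 * A.1 1 1 - A.1 0 1 * A.1 1 0 = 1 := by
    have := A.2; rwa [Matrix.det_fin_two] at this
  have hBdet : B.1 0 0 * B.1 1 1 - B.1 0 1 * B.1 1 0 = 1 := by
    have := B.2; rwa [Matrix.det_fin_two] at this
  have hAinv : (A⁻¹).1 = !![A.1 1 1, -A.1 0 1; -A.1 1 0, A.1 0 0] := by
    rw [Matrix.SpecialLinearGroup.coe_inv, Matrix.adjugate_fin_two]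
  rw [hAinv] at h
  have hBB : B.1 0 0 + B.1 1 1 = 0 → B.1 * B.1 = -1 := by
    intro hps
    ext i j
    fin_cases i <;> fin_cases j
    · simp only [Matrix.mul_apply, Fin.sum_univ_two, Matrix.neg_apply, Matrix.one_apply,
        Fin.zero_eta, if_true, Fin.isValue]
      linear_combination B.1 0 0 * hps - hBdet
    · simp only [Matrix.mul_apply, Fin.sum_univ_two, Matrix.neg_apply, Matrix.one_apply,
        Fin.isValue]
      norm_num
      linear_combination B.1 0 1 * hps
    · simp only [Matrix.mul_apply, Fin.sum_univ_two, Matrix.neg_apply, Matrix.one_apply,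
        Fin.isValue]
      norm_num
      linear_combination B.1 1 0 * hps
    · simp only [Matrix.mul_apply, Fin.sum_univ_two, Matrix.neg_apply, Matrix.one_apply,
        Fin.isValue, if_true]
      norm_num
      linear_combination B.1 1 1 * hps - hBdet
  rcases h with h | h
  · have e00 := congr_fun (congr_fun h 0) 0
    have e01 := congr_fun (congr_fun h 0) 1
    have e10 := congr_fun (congr_fun h 1) 0
    have e11 := congr_fun (congr_fun h 1) 1
    simp [Matrix.mul_apply, Fin.sum_univ_two] at e00 e01 e10 e11
    by_cases hps : B.1 0 0 + B.1 1 1 = 0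
    · exact Or.inl (hBB hps)
    · right
      have hb : A.1 0 1 = 0 := by
        have : A.1 0 1 * (B.1 0 0 + B.1 1 1) = 0 := by linear_combination e01
        rcases mul_eq_zero.mp this with h' | h'
        · exact h'
        · exact absurd h' hps
      have hc : A.1 1 0 = 0 := by
        have : A.1 1 0 * (B.1 0 0 + B.1 1 1) = 0 := by linear_combination e10
        rcases mul_eq_zero.mp this with h' | h'
        · exact h'
        · exact absurd h' hps
      have had : A.1 0 0 = A.1 1 1 := by
        have : (A.1 0 0 - A.1 1 1) * (B.1 0 0 + B.1 1 1) = 0 := by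
          linear_combination e00 - e11
        rcases mul_eq_zero.mp this with h' | h'
        · linarith
        · exact absurd h' hps
      have ha1 : A.1 0 0 * A.1 0 0 = 1 := by
        rw [hb, hc] at hAdet; rw [← had] at hAdet; linarith [hAdet]
      left
      ext i j
      fin_cases i <;> fin_cases j
      · simp only [Matrix.mul_apply, Fin.sum_univ_two, Matrix.one_apply, Fin.isValue, if_true,
          Fin.zero_eta]
        ring_nf
        linear_combination ha1 + A.1 1 0 * hb
      · simp only [Matrix.mul_apply, Fin.sum_univ_two, Matrix.one_apply, Fin.isValue]
        norm_num
        linear_combination (A.1 0 0 + A.1 1 1) * hb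
      · simp only [Matrix.mul_apply, Fin.sum_univ_two, Matrix.one_apply, Fin.isValue]
        norm_num
        linear_combination (A.1 0 0 + A.1 1 1) * hc
      · simp only [Matrix.mul_apply, Fin.sum_univ_two, Matrix.one_apply, Fin.isValue]
        norm_num
        linear_combination ha1 + A.1 0 1 * hc - (A.1 0 0 + A.1 1 1) * had
  · have h2 : B.1 * A.1 + !![A.1 1 1, -A.1 0 1; -A.1 1 0, A.1 0 0] * B.1 = 0 := by
      rw [h, neg_add_cancel]
    have e00 := congr_fun (congr_fun h2 0) 0
    have e11 := congr_fun (congr_fun h2 1) 1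
    simp only [Matrix.add_apply, Matrix.zero_apply, Matrix.mul_apply, Fin.sum_univ_two,
      Matrix.of_apply, Matrix.cons_val', Matrix.cons_val_zero, Matrix.cons_val_one,
      Matrix.head_cons, Matrix.head_fin_const, Matrix.empty_val',
      Matrix.cons_val_fin_one] at e00 e11
    have key : (A.1 0 0 + A.1 1 1) * (B.1 0 0 + B.1 1 1) = 0 := by
      linear_combination e00 + e11
    rcases mul_eq_zero.mp key with h' | h'
    · right; right
      ext i j
      fin_cases i <;> fin_cases j
      · simp only [Matrix.mul_apply, Fin.sum_univ_two, Matrix.neg_apply, Matrix.one_apply,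
          Fin.isValue, if_true, Fin.zero_eta]
        linear_combination A.1 0 0 * h' - hAdet
      · simp only [Matrix.mul_apply, Fin.sum_univ_two, Matrix.neg_apply, Matrix.one_apply,
          Fin.isValue]
        norm_num
        linear_combination A.1 0 1 * h'
      · simp only [Matrix.mul_apply, Fin.sum_univ_two, Matrix.neg_apply, Matrix.one_apply,
          Fin.isValue]
        norm_num
        linear_combination A.1 1 0 * h'
      · simp only [Matrix.mul_apply, Fin.sum_univ_two, Matrix.neg_apply, Matrix.one_apply,
          Fin.isValue]
        norm_num
        linear_combination A.1 1 1 * h' - hAdet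
    · exact Or.inl (hBB h')
/-- In a Fuchsian group `Γ`, an element is reciprocal iff it is strongly
reciprocal; moreover if `g² ≠ 1`, every reciprocator of `g` is an involution. -/
theorem reciprocal_iff_stronglyReciprocal_in_fuchsian
    (Γ : Subgroup PSL2R) [DiscreteTopology Γ] (g : PSL2R) (hg : g ∈ Γ) :
    ((∃ h ∈ Γ, h * g * h⁻¹ = g⁻¹) ↔ ∃ h ∈ Γ, h ^ 2 = 1 ∧ h * g * h⁻¹ = g⁻¹) ∧
      (g ^ 2 ≠ 1 → ∀ h ∈ Γ, h * g * h⁻¹ = g⁻¹ → h ^ 2 = 1) := by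
  obtain ⟨A, rfl⟩ := QuotientGroup.mk_surjective g
  have part2 : (QuotientGroup.mk A : PSL2R) ^ 2 ≠ 1 →
      ∀ h ∈ Γ, h * QuotientGroup.mk A * h⁻¹ = (QuotientGroup.mk A : PSL2R)⁻¹ → h ^ 2 = 1 := by
    intro hg2 h hΓ hrec
    obtain ⟨B, rfl⟩ := QuotientGroup.mk_surjective h
    have hmk : (QuotientGroup.mk (B * A * B⁻¹) : PSL2R) = QuotientGroup.mk (A⁻¹) := by
      simpa using hrec
    have hmem := QuotientGroup.eq.mp hmk
    have hz := coe_center hmem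
    have hrel : B.1 * A.1 = (A⁻¹).1 * B.1 ∨ B.1 * A.1 = -((A⁻¹).1 * B.1) := by
      rcases hz with h1 | h1
      · left
        have h4 : B * A * B⁻¹ = A⁻¹ := inv_mul_eq_one.mp (Subtype.ext h1)
        have h5 : B * A = A⁻¹ * B := by
          calc B * A = (B * A * B⁻¹) * B := by group
          _ = A⁻¹ * B := by rw [h4]
        have h6 := congrArg Subtype.val h5
        simpa using h6
      · right
        have hz1 : (B * A * B⁻¹)⁻¹ * A⁻¹ = negI := Subtype.ext h1
        have h4 : B * A * B⁻¹ = A⁻¹ * negI⁻¹ := by rw [← hz1]; group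
        rw [negI_inv] at h4
        have h5 : B * A = A⁻¹ * negI * B := by
          calc B * A = (B * A * B⁻¹) * B := by group
          _ = A⁻¹ * negI * B := by rw [h4]
        have h6 := congrArg Subtype.val h5
        simp only [Matrix.SpecialLinearGroup.coe_mul] at h6
        rw [h6]
        show (A⁻¹).1 * (-1) * B.1 = -((A⁻¹).1 * B.1)
        rw [Matrix.mul_neg, Matrix.mul_one, Matrix.neg_mul]
    rcases core A B hrel with hB | hA
    · exact psl_sq_one (Or.inr hB)
    · exact absurd (psl_sq_one hA) hg2
  refine ⟨⟨?_, ?_⟩, part2⟩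
  · rintro ⟨h, hΓ, hrec⟩
    by_cases hg2 : (QuotientGroup.mk A : PSL2R) ^ 2 = 1
    · refine ⟨1, Γ.one_mem, one_pow 2, ?_⟩
      rw [one_mul, inv_one, mul_one]
      exact eq_inv_of_mul_eq_one_left (by rw [← sq]; exact hg2)
    · exact ⟨h, hΓ, part2 hg2 h hΓ hrec, hrec⟩
  · rintro ⟨h, hΓ, _, hrec⟩
    exact ⟨h, hΓ, hrec⟩
end
end

section
/- Let Γ be a Fuchsian group and let g ∈ Γ be reciprocal in Γ (there exists h ∈ Γ with h*g*h⁻¹ = g⁻¹). Then either g² = 1 or g is hyperbolic. -/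
noncomputable section

lemma key_entries (a b c d p q r s : ℝ)
    (hM : a*d - b*c = 1) (hN : p*s - q*r = 1) (hT : (a+d)^2 ≤ 4)
    (e1 : p*a + q*c = d*p - b*r) (e2 : p*b + q*d = d*q - b*s)
    (e3 : r*a + s*c = -(c*p) + a*r) (e4 : r*b + s*d = -(c*q) + a*s) :
    a = d ∧ b = 0 ∧ c = 0 := by
  have hb : b*(p+s) = 0 := by linear_combination e2
  have hc : c*(p+s) = 0 := by linear_combination e3
  have had : (a-d)*(p+s) = 0 := by linear_combination e1 - e4
  by_cases hps : p + s = 0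
  · have hs : s = -p := by linarith
    subst hs
    have hqr : q*r = -p^2 - 1 := by linear_combination -hN
    have h1 : q*c + b*r = d*p - p*a := by linear_combination e1
    have hsum : (q*c - b*r)^2 + (a-d)^2 + (p^2+1)*(4-(a+d)^2) = 0 := by
      linear_combination (q*c+b*r+d*p-p*a) * h1 + (-4*b*c) * hqr + (-4*(p^2+1)) * hM
    have hp1 : (0:ℝ) < p^2 + 1 := by positivity
    have hE : (a-d)^2 = 0 := by nlinarith [sq_nonneg (q*c - b*r)]
    have hu : (q*c - b*r)^2 = 0 := by nlinarith [sq_nonneg (a-d)]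
    have hE' : a = d := by have := pow_eq_zero_iff (n := 2) (by norm_num) |>.mp hE; linarith
    have hu' : q*c - b*r = 0 := by
      have := pow_eq_zero_iff (n := 2) (by norm_num) |>.mp hu; linarith
    have hqc : q*c = 0 := by
      have : q*c + b*r = 0 := by rw [h1, hE']; ring
      linarith
    have hbr : b*r = 0 := by linarith [hqc, hu']
    have hq : q ≠ 0 := by intro h; rw [h] at hqr; nlinarith
    have hr : r ≠ 0 := by intro h; rw [h] at hqr; nlinarith
    exact ⟨hE', (mul_eq_zero.mp hbr).resolve_right hr, (mul_eq_zero.mp hqc).resolve_left hq⟩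
  · refine ⟨?_, (mul_eq_zero.mp hb).resolve_right hps, (mul_eq_zero.mp hc).resolve_right hps⟩
    have := (mul_eq_zero.mp had).resolve_right hps; linarith

lemma center_val (w : SL2R) (hw : w ∈ Subgroup.center SL2R) : (w.1 = 1 ∨ w.1 = -1) := by
  obtain ⟨r, hr, hs⟩ := Matrix.SpecialLinearGroup.mem_center_iff.mp hw
  simp at hr
  rcases hr with h | h
  · left; rw [← hs, h]; simp
  · right; rw [← hs, h]
    ext i j
    simp [Matrix.diagonal_apply, Matrix.one_apply]
    split <;> simp

/-- A reciprocal element of a Fuchsian group is an involution or hyperbolic. -/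
theorem reciprocal_in_fuchsian_involution_or_hyperbolic
    (Γ : Subgroup PSL2R) [DiscreteTopology Γ] (g : PSL2R) (hg : g ∈ Γ)
    (hrec : ∃ h ∈ Γ, h * g * h⁻¹ = g⁻¹) :
    g ^ 2 = 1 ∨ IsHyperbolic g := by
  obtain ⟨h, _, hcon⟩ := hrec
  obtain ⟨A, rfl⟩ := QuotientGroup.mk_surjective g
  obtain ⟨B, rfl⟩ := QuotientGroup.mk_surjective h
  by_cases htr : 2 < |Matrix.trace (A : Matrix (Fin 2) (Fin 2) ℝ)|
  · exact Or.inr ⟨A, rfl, htr⟩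
  left
  push_neg at htr
  -- extract central element
  have h1 : (QuotientGroup.mk (B * A * B⁻¹) : PSL2R) = QuotientGroup.mk (A⁻¹ : SL2R) := by
    simpa using hcon
  have h2 := (QuotientGroup.eq (s := Subgroup.center SL2R)).mp h1
  set w : SL2R := ((B * A * B⁻¹)⁻¹ * A⁻¹)⁻¹ with hw
  have hwc : w ∈ Subgroup.center SL2R := inv_mem h2
  have hx : B * A * B⁻¹ = A⁻¹ * w := by rw [hw]; group
  -- entries
  set a := A.1 0 0 with ha; set b := A.1 0 1 with hb
  set c := A.1 1 0 with hc; set d := A.1 1 1 with hd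
  have hMdet : a*d - b*c = 1 := by
    have := A.2; rw [Matrix.det_fin_two] at this; linarith
  have hinv : (A⁻¹).1 = !![d, -b; -c, a] := by
    rw [Matrix.SpecialLinearGroup.SL2_inv_expl]
    rfl
  have htrA : Matrix.trace (A : Matrix (Fin 2) (Fin 2) ℝ) = a + d := by
    rw [Matrix.trace_fin_two]
  have hT : (a+d)^2 ≤ 4 := by
    have h4 := abs_le.mp htr
    rw [htrA] at h4
    nlinarith [h4.1, h4.2]
  -- show A*A is central
  suffices hcent : A * A ∈ Subgroup.center SL2R by
    rw [sq, ← QuotientGroup.mk_mul]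
    exact (QuotientGroup.eq_one_iff _).mpr hcent
  rcases center_val w hwc with hw1 | hw1
  · -- w = 1 : B A B⁻¹ = A⁻¹
    have hw1' : w = 1 := Subtype.ext (by simpa using hw1)
    rw [hw1', mul_one] at hx
    have hBA : B * A = A⁻¹ * B := by
      have := congrArg (· * B) hx
      simpa [mul_assoc] using this
    have hmat : B.1 * A.1 = !![d, -b; -c, a] * B.1 := by
      have := congrArg Subtype.val hBA
      rw [Matrix.SpecialLinearGroup.coe_mul, Matrix.SpecialLinearGroup.coe_mul, hinv] at this
      exact this
    set p := B.1 0 0; set q := B.1 0 1; set r := B.1 1 0; set s := B.1 1 1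
    have hNdet : p*s - q*r = 1 := by
      have := B.2; rw [Matrix.det_fin_two] at this; linarith
    have e1 := congrFun (congrFun hmat 0) 0
    have e2 := congrFun (congrFun hmat 0) 1
    have e3 := congrFun (congrFun hmat 1) 0
    have e4 := congrFun (congrFun hmat 1) 1
    simp [Matrix.mul_apply, Fin.sum_univ_two] at e1 e2 e3 e4
    obtain ⟨had, hb0, hc0⟩ := key_entries a b c d p q r s hMdet hNdet hT
      (by linarith [e1]) (by linarith [e2]) (by linarith [e3]) (by linarith [e4])
    apply Matrix.SpecialLinearGroup.mem_center_iff.mpr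
    refine ⟨1, by norm_num, ?_⟩
    · ext i j
      rw [Matrix.SpecialLinearGroup.coe_mul]
      fin_cases i <;> fin_cases j <;>
        simp [Matrix.mul_apply, Fin.sum_univ_two, Matrix.scalar_apply, Matrix.diagonal_apply,
          ← ha, ← hb, ← hc, ← hd] <;>
        first
          | linear_combination -hMdet - a*had - 2*c*hb0
          | linear_combination -(a+d)*hb0
          | linear_combination -(a+d)*hc0
          | linear_combination -hMdet + d*had - 2*c*hb0
  · -- w = -1 : trace forces a + d = 0
    have hxval : B.1 * A.1 * (B⁻¹).1 = -(A⁻¹).1 := by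
      have := congrArg Subtype.val hx
      simpa [Matrix.SpecialLinearGroup.coe_mul, hw1] using this
    have htr0 : a + d = 0 := by
      have t1 : Matrix.trace (B.1 * A.1 * (B⁻¹).1) = Matrix.trace (A.1) := by
        rw [Matrix.trace_mul_comm]
        congr 1
        rw [← Matrix.SpecialLinearGroup.coe_mul, ← Matrix.SpecialLinearGroup.coe_mul,
          inv_mul_cancel_left]
      have t2 : Matrix.trace (-(A⁻¹).1) = -(d + a) := by
        rw [Matrix.trace_neg, hinv, Matrix.trace_fin_two]
        simp
      rw [hxval, t2, htrA] at t1
      linarith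
    apply Matrix.SpecialLinearGroup.mem_center_iff.mpr
    refine ⟨-1, ?_, ?_⟩
    · simp
    · ext i j
      rw [Matrix.SpecialLinearGroup.coe_mul]
      fin_cases i <;> fin_cases j <;>
        simp [Matrix.mul_apply, Fin.sum_univ_two, Matrix.scalar_apply, Matrix.diagonal_apply,
          ← ha, ← hb, ← hc, ← hd] <;>
        first
          | linear_combination hMdet - a*htr0
          | linear_combination -b*htr0
          | linear_combination -c*htr0
          | linear_combination hMdet - d*htr0
end
end

section
/- Let Γ be a Fuchsian group and let g ∈ Γ be a primitive hyperbolic element. Then for every nonzero integer n, g is reciprocal in Γ if and only if gⁿ is reciprocal in Γ. -/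
noncomputable section

set_option maxHeartbeats 1600000

private lemma diag_fin_two (l mu : ℝ) :
    Matrix.diagonal ![l, mu] = !![l, 0; 0, mu] := by
  ext i j; fin_cases i <;> fin_cases j <;> simp [Matrix.diagonal_apply]

private lemma sl2_diagonalize (A : SL2R) (htr : 2 < |Matrix.trace (A : Matrix (Fin 2) (Fin 2) ℝ)|) :
    ∃ (P Q : Matrix (Fin 2) (Fin 2) ℝ) (l mu : ℝ), P * Q = 1 ∧ Q * P = 1 ∧
      l * mu = 1 ∧ l * l ≠ 1 ∧ (A : Matrix (Fin 2) (Fin 2) ℝ) = P * Matrix.diagonal ![l, mu] * Q := by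
  obtain ⟨a, b, c, d, hA⟩ : ∃ a b c d, (A : Matrix (Fin 2) (Fin 2) ℝ) = !![a, b; c, d] :=
    ⟨_, _, _, _, Matrix.eta_fin_two _⟩
  have hdet : a * d - b * c = 1 := by
    have h := A.prop; rw [hA, Matrix.det_fin_two_of] at h; exact h
  have ht4 : 4 < (a + d) ^ 2 := by
    rw [hA, Matrix.trace_fin_two_of] at htr
    nlinarith [sq_abs (a + d), abs_nonneg (a + d)]
  rw [hA]
  by_cases hb : b = 0
  · subst hb
    have had : a * d = 1 := by linarith
    have hane : a ≠ d := fun h => by nlinarith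
    have hsub : a - d ≠ 0 := sub_ne_zero.mpr hane
    refine ⟨!![a - d, 0; c, 1], (a - d)⁻¹ • !![1, 0; -c, a - d], a, d, ?_, ?_, had, ?_, ?_⟩
    · rw [Matrix.mul_smul, Matrix.mul_fin_two, Matrix.one_fin_two]
      ext i j
      fin_cases i <;> fin_cases j
      all_goals (try simp)
      all_goals (try field_simp)
      all_goals (first | tauto | ring1 | (right; ring1) | (left; ring1) | field_simp | (rw [div_eq_iff hsub]; ring1) | (rw [div_eq_iff (mul_ne_zero (sub_ne_zero.mpr (Ne.symm hlm_ne)) hb)]; ring1) | (rw [div_eq_iff (mul_ne_zero hb (sub_ne_zero.mpr (Ne.symm hlm_ne)))]; ring1))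
    · rw [Matrix.smul_mul, Matrix.mul_fin_two, Matrix.one_fin_two]
      ext i j
      fin_cases i <;> fin_cases j
      all_goals (try simp)
      all_goals (try field_simp)
      all_goals (first | tauto | ring1 | (right; ring1) | (left; ring1) | field_simp | (rw [div_eq_iff hsub]; ring1) | (rw [div_eq_iff (mul_ne_zero (sub_ne_zero.mpr (Ne.symm hlm_ne)) hb)]; ring1) | (rw [div_eq_iff (mul_ne_zero hb (sub_ne_zero.mpr (Ne.symm hlm_ne)))]; ring1))
    · intro h1; exact hane (by nlinarith)
    · rw [diag_fin_two, Matrix.mul_fin_two, Matrix.mul_smul, Matrix.mul_fin_two]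
      ext i j
      fin_cases i <;> fin_cases j
      all_goals (try simp)
      all_goals (try field_simp)
      all_goals (first | tauto | ring1 | (right; ring1) | field_simp | linear_combination had | linear_combination -had | linear_combination c * had | linear_combination d * had)
  · set t := a + d with htdef
    have hs4 : (0:ℝ) < t ^ 2 - 4 := by linarith
    set s := Real.sqrt (t ^ 2 - 4) with hsdef
    have hs2 : s ^ 2 = t ^ 2 - 4 := Real.sq_sqrt (le_of_lt hs4)
    have hspos : 0 < s := Real.sqrt_pos.mpr hs4
    have hsne : s ≠ 0 := ne_of_gt hspos
    set l := (t + s) / 2 with hldef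
    set mu := (t - s) / 2 with hmudef
    have hlmu : l * mu = 1 := by rw [hldef, hmudef]; linear_combination (-(1:ℝ)/4) * hs2
    have hlne : l ≠ 0 := fun h => by rw [h, zero_mul] at hlmu; norm_num at hlmu
    have hlm_ne : l ≠ mu := fun h => by
      have h2 : l - mu = s := by rw [hldef, hmudef]; ring
      rw [h, sub_self] at h2; linarith
    have hll : l * l ≠ 1 := by
      intro h
      exact hlm_ne (mul_left_cancel₀ hlne (h.trans hlmu.symm))
    have hq : l ^ 2 = t * l - 1 := by rw [hldef]; linear_combination ((1:ℝ)/4) * hs2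
    have hqm : mu ^ 2 = t * mu - 1 := by rw [hmudef]; linear_combination ((1:ℝ)/4) * hs2
    have hbml : b * (mu - l) ≠ 0 := mul_ne_zero hb (sub_ne_zero.mpr (Ne.symm hlm_ne))
    refine ⟨!![b, b; l - a, mu - a], (b * (mu - l))⁻¹ • !![mu - a, -b; a - l, b], l, mu,
      ?_, ?_, hlmu, hll, ?_⟩
    · rw [Matrix.mul_smul, Matrix.mul_fin_two, Matrix.one_fin_two]
      ext i j
      fin_cases i <;> fin_cases j
      all_goals (try simp)
      all_goals (try field_simp)
      all_goals (first | tauto | ring1 | (right; ring1) | (left; ring1) | field_simp | (rw [div_eq_iff hsub]; ring1) | (rw [div_eq_iff (mul_ne_zero (sub_ne_zero.mpr (Ne.symm hlm_ne)) hb)]; ring1) | (rw [div_eq_iff (mul_ne_zero hb (sub_ne_zero.mpr (Ne.symm hlm_ne)))]; ring1))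
    · rw [Matrix.smul_mul, Matrix.mul_fin_two, Matrix.one_fin_two]
      ext i j
      fin_cases i <;> fin_cases j
      all_goals (try simp)
      all_goals (try field_simp)
      all_goals (first | tauto | ring1 | (right; ring1) | (left; ring1) | field_simp | (rw [div_eq_iff hsub]; ring1) | (rw [div_eq_iff (mul_ne_zero (sub_ne_zero.mpr (Ne.symm hlm_ne)) hb)]; ring1) | (rw [div_eq_iff (mul_ne_zero hb (sub_ne_zero.mpr (Ne.symm hlm_ne)))]; ring1))
    · have hAP : !![a, b; c, d] * !![b, b; l - a, mu - a]
          = !![b, b; l - a, mu - a] * Matrix.diagonal ![l, mu] := by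
        rw [diag_fin_two, Matrix.mul_fin_two, Matrix.mul_fin_two]
        ext i j
        fin_cases i <;> fin_cases j
        all_goals (try simp)
        all_goals (first | tauto | ring1 | linear_combination -hq - hdet | linear_combination -hqm - hdet | linear_combination hq + hdet | linear_combination hqm + hdet | linear_combination hq - hdet | linear_combination hqm - hdet)
      have hPQ : !![b, b; l - a, mu - a] * ((b * (mu - l))⁻¹ • !![mu - a, -b; a - l, b]) = 1 := by
        rw [Matrix.mul_smul, Matrix.mul_fin_two, Matrix.one_fin_two]
        ext i j
        fin_cases i <;> fin_cases j
        all_goals (try simp)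
        all_goals (try field_simp)
        all_goals (first | tauto | ring1 | (right; ring1) | (left; ring1) | field_simp | (rw [div_eq_iff (mul_ne_zero (sub_ne_zero.mpr (Ne.symm hlm_ne)) hb)]; ring1) | (rw [div_eq_iff (mul_ne_zero hb (sub_ne_zero.mpr (Ne.symm hlm_ne)))]; ring1))
      calc !![a, b; c, d]
          = !![a, b; c, d] * (!![b, b; l - a, mu - a] * ((b * (mu - l))⁻¹ • !![mu - a, -b; a - l, b])) := by
            rw [hPQ, mul_one]
        _ = (!![a, b; c, d] * !![b, b; l - a, mu - a]) * ((b * (mu - l))⁻¹ • !![mu - a, -b; a - l, b]) := by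
            rw [mul_assoc]
        _ = _ := by rw [hAP]

private lemma center_coe' {Z : SL2R} (h : Z ∈ Subgroup.center SL2R) :
    (Z : Matrix (Fin 2) (Fin 2) ℝ) = 1 ∨ (Z : Matrix (Fin 2) (Fin 2) ℝ) = -1 := by
  obtain ⟨r, hr, hZ⟩ := Matrix.SpecialLinearGroup.mem_center_iff.mp h
  rw [Fintype.card_fin] at hr
  have h2 : (r - 1) * (r + 1) = 0 := by linear_combination hr
  rcases mul_eq_zero.mp h2 with h1 | h1
  · left; rw [← hZ]
    have hr1 : r = 1 := by linarith
    rw [hr1, map_one]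
  · right; rw [← hZ]
    have hr1 : r = -1 := by linarith
    rw [hr1]
    ext i j
    by_cases hij : i = j <;>
      simp [Matrix.scalar_apply, Matrix.diagonal_apply, Matrix.one_apply, hij]

private lemma center_of_coe' {Z : SL2R}
    (h : (Z : Matrix (Fin 2) (Fin 2) ℝ) = 1 ∨ (Z : Matrix (Fin 2) (Fin 2) ℝ) = -1) :
    Z ∈ Subgroup.center SL2R := by
  rw [Matrix.SpecialLinearGroup.mem_center_iff]
  rcases h with h | h
  · exact ⟨1, by norm_num, by rw [map_one, h]⟩
  · refine ⟨-1, by norm_num, ?_⟩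
    rw [h]
    ext i j
    by_cases hij : i = j <;>
      simp [Matrix.scalar_apply, Matrix.diagonal_apply, Matrix.one_apply, hij]

private lemma conj_mul_conj {P Q M N : Matrix (Fin 2) (Fin 2) ℝ} (hPQ : P * Q = 1) :
    (Q * M * P) * (Q * N * P) = Q * (M * N) * P := by
  calc (Q * M * P) * (Q * N * P) = Q * (M * ((P * Q) * (N * P))) := by
        simp only [Matrix.mul_assoc]
    _ = Q * (M * N) * P := by rw [hPQ, one_mul]; simp only [Matrix.mul_assoc]

private lemma key_root (A X : SL2R)
    (htr : 2 < |Matrix.trace (A : Matrix (Fin 2) (Fin 2) ℝ)|)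
    (m : ℕ) (hm : 0 < m) (h : X ^ m * A ^ m ∈ Subgroup.center SL2R) :
    X * A ∈ Subgroup.center SL2R := by
  obtain ⟨P, Q, l, mu, hPQ, hQP, hlmu, hll, hA⟩ := sl2_diagonalize A htr
  set B := (X : Matrix (Fin 2) (Fin 2) ℝ) with hBdef
  set C := (A : Matrix (Fin 2) (Fin 2) ℝ) with hCdef
  set D := Matrix.diagonal ![l, mu] with hDdef
  -- X commutes with A ^ m
  have cZ : Commute X (X ^ m * A ^ m) := Subgroup.mem_center_iff.mp h X
  have cXm : Commute X ((X ^ m)⁻¹) := ((Commute.refl X).pow_right m).inv_right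
  have cA : Commute X (A ^ m) := by
    have h2 := cXm.mul_right cZ
    rwa [inv_mul_cancel_left] at h2
  -- matrix versions
  have uQ : (Matrix (Fin 2) (Fin 2) ℝ)ˣ := ⟨Q, P, hQP, hPQ⟩
  have hCm : C ^ m = P * D ^ m * Q := by
    have := Units.conj_pow (⟨P, Q, hPQ, hQP⟩ : (Matrix (Fin 2) (Fin 2) ℝ)ˣ) D m
    simpa [hA] using this
  have hDm : D ^ m = Matrix.diagonal ![l ^ m, mu ^ m] := by
    rw [hDdef, Matrix.diagonal_pow]
    apply congrArg Matrix.diagonal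
    funext i; fin_cases i <;> simp [Pi.pow_apply]
  have hD' : D ^ m = Q * C ^ m * P := by
    rw [hCm]
    calc D ^ m = (Q * P) * D ^ m * (Q * P) := by rw [hQP]; simp
      _ = Q * (P * D ^ m * Q) * P := by simp only [Matrix.mul_assoc]
  set B' := Q * B * P with hB'def
  have hBCm : B * C ^ m = C ^ m * B := by
    have h2 := congrArg (fun Z : SL2R => (Z : Matrix (Fin 2) (Fin 2) ℝ)) cA.eq
    simpa [Matrix.SpecialLinearGroup.coe_mul, Matrix.SpecialLinearGroup.coe_pow] using h2
  have hB'comm : B' * D ^ m = D ^ m * B' := by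
    rw [hD', hB'def, conj_mul_conj hPQ, conj_mul_conj hPQ, hBCm]
  -- l^m ≠ mu^m
  have habs : |l| ≠ |mu| := by
    intro hEq
    apply hll
    have h1 : |l| * |mu| = 1 := by rw [← abs_mul, hlmu, abs_one]
    have h2 : |l| * |l| = 1 := by nth_rewrite 2 [hEq]; exact h1
    calc l * l = |l * l| := (abs_of_nonneg (mul_self_nonneg l)).symm
      _ = |l| * |l| := abs_mul l l
      _ = 1 := h2
  have hlmne : l ^ m ≠ mu ^ m := by
    intro hEq
    have h2 : |l| ^ m = |mu| ^ m := by
      rw [← abs_pow, ← abs_pow, hEq]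
    rcases lt_trichotomy |l| |mu| with h3 | h3 | h3
    · exact absurd h2 (ne_of_lt (pow_lt_pow_left₀ h3 (abs_nonneg l) hm.ne'))
    · exact habs h3
    · exact absurd h2.symm (ne_of_lt (pow_lt_pow_left₀ h3 (abs_nonneg mu) hm.ne'))
  -- B' is diagonal
  have h01 : B' 0 1 = 0 := by
    have h2 := congr_fun (congr_fun hB'comm 0) 1
    rw [hDm] at h2
    simp [Matrix.mul_apply, Fin.sum_univ_two, Matrix.diagonal_apply] at h2
    have h3 : B' 0 1 * (mu ^ m - l ^ m) = 0 := by linear_combination h2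
    rcases mul_eq_zero.mp h3 with h4 | h4
    · exact h4
    · exact absurd (sub_eq_zero.mp h4) (Ne.symm hlmne)
  have h10 : B' 1 0 = 0 := by
    have h2 := congr_fun (congr_fun hB'comm 1) 0
    rw [hDm] at h2
    simp [Matrix.mul_apply, Fin.sum_univ_two, Matrix.diagonal_apply] at h2
    have h3 : B' 1 0 * (l ^ m - mu ^ m) = 0 := by linear_combination h2
    rcases mul_eq_zero.mp h3 with h4 | h4
    · exact h4
    · exact absurd (sub_eq_zero.mp h4) hlmne
  set u := B' 0 0 with hudef
  set v := B' 1 1 with hvdef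
  have hB'diag : B' = Matrix.diagonal ![u, v] := by
    ext i j
    fin_cases i <;> fin_cases j <;> simp [Matrix.diagonal_apply, h01, h10, hudef, hvdef]
  -- det B' = 1
  have hdetPQ : Q.det * P.det = 1 := by
    have h2 := congrArg Matrix.det hQP
    rwa [Matrix.det_mul, Matrix.det_one] at h2
  have hdetB' : u * v = 1 := by
    have h2 : B'.det = Q.det * B.det * P.det := by
      rw [hB'def, Matrix.det_mul, Matrix.det_mul]
    rw [X.prop, mul_one] at h2
    have h3 : B'.det = u * v - B' 0 1 * B' 1 0 := Matrix.det_fin_two B'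
    rw [h01, h10, mul_zero, sub_zero] at h3
    rw [h2, hdetPQ] at h3
    exact h3.symm
  -- central equation
  obtain ⟨e, he, hE⟩ : ∃ e : ℝ, (e = 1 ∨ e = -1) ∧
      B ^ m * C ^ m = e • (1 : Matrix (Fin 2) (Fin 2) ℝ) := by
    rcases center_coe' h with h' | h'
    · refine ⟨1, Or.inl rfl, ?_⟩
      rw [one_smul]
      simpa [Matrix.SpecialLinearGroup.coe_mul, Matrix.SpecialLinearGroup.coe_pow] using h'
    · refine ⟨-1, Or.inr rfl, ?_⟩
      rw [neg_smul, one_smul]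
      simpa [Matrix.SpecialLinearGroup.coe_mul, Matrix.SpecialLinearGroup.coe_pow] using h'
  have hB'm : B' ^ m = Q * B ^ m * P := Units.conj_pow (⟨Q, P, hQP, hPQ⟩ : (Matrix (Fin 2) (Fin 2) ℝ)ˣ) B m
  have hEq2 : B' ^ m * D ^ m = e • (1 : Matrix (Fin 2) (Fin 2) ℝ) := by
    rw [hB'm, hD', conj_mul_conj hPQ, hE]
    rw [Matrix.mul_smul, mul_one, Matrix.smul_mul, hQP]
  have hB'pow : B' ^ m = Matrix.diagonal ![u ^ m, v ^ m] := by
    rw [hB'diag, Matrix.diagonal_pow]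
    apply congrArg Matrix.diagonal
    funext i; fin_cases i <;> simp [Pi.pow_apply]
  rw [hB'pow, hDm, Matrix.diagonal_mul_diagonal] at hEq2
  have h00 : u ^ m * l ^ m = e := by
    have h2 := congr_fun (congr_fun hEq2 0) 0
    simpa [Matrix.diagonal_apply, Matrix.one_apply] using h2
  have h11 : v ^ m * mu ^ m = e := by
    have h2 := congr_fun (congr_fun hEq2 1) 1
    simpa [Matrix.diagonal_apply, Matrix.one_apply] using h2
  -- conclude u*l = ±1
  have hulm : (u * l) ^ m = e := by rw [mul_pow]; exact h00
  have habs1 : |u * l| = 1 := by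
    have h2 : |u * l| ^ m = 1 := by
      rw [← abs_pow, hulm]
      rcases he with h' | h' <;> rw [h'] <;> norm_num
    rcases lt_trichotomy |u * l| 1 with h3 | h3 | h3
    · exact absurd h2 (ne_of_lt (pow_lt_one₀ (abs_nonneg _) h3 hm.ne'))
    · exact h3
    · exact absurd h2.symm (ne_of_lt (one_lt_pow₀ h3 hm.ne'))
  have hul : u * l = 1 ∨ u * l = -1 := by
    rcases (abs_eq (by norm_num : (0:ℝ) ≤ 1)).mp habs1 with h' | h'
    · exact Or.inl h'
    · exact Or.inr h'
  set dl := u * l with hdldef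
  have hdd : dl * dl = 1 := by rcases hul with h' | h' <;> rw [h'] <;> norm_num
  have hvmu : v * mu = dl := by
    have hprod : dl * (v * mu) = 1 := by
      rw [hdldef]
      calc u * l * (v * mu) = (u * v) * (l * mu) := by ring
        _ = 1 := by rw [hdetB', hlmu, mul_one]
    calc v * mu = (dl * dl) * (v * mu) := by rw [hdd, one_mul]
      _ = dl * (dl * (v * mu)) := by ring
      _ = dl := by rw [hprod, mul_one]
  -- conclude
  have hB'D : B' * D = dl • (1 : Matrix (Fin 2) (Fin 2) ℝ) := by
    rw [hB'diag, hDdef, Matrix.diagonal_mul_diagonal]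
    ext i j
    fin_cases i <;> fin_cases j <;>
      simp [Matrix.diagonal_apply, Matrix.one_apply, hvmu, hdldef]
  have hBmat : B = P * B' * Q := by
    rw [hB'def]
    calc B = (P * Q) * (B * (P * Q)) := by rw [hPQ]; simp
      _ = P * (Q * B * P) * Q := by simp only [Matrix.mul_assoc]
  have hfinal : B * C = dl • (1 : Matrix (Fin 2) (Fin 2) ℝ) := by
    rw [hBmat, hA, conj_mul_conj hQP, hB'D]
    rw [Matrix.mul_smul, mul_one, Matrix.smul_mul, hPQ]
  apply center_of_coe'
  have hXAcoe : ((X * A : SL2R) : Matrix (Fin 2) (Fin 2) ℝ) = dl • (1 : Matrix (Fin 2) (Fin 2) ℝ) := by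
    rw [Matrix.SpecialLinearGroup.coe_mul]
    exact hfinal
  rcases hul with h' | h'
  · left
    rw [hXAcoe, h', one_smul]
  · right
    rw [hXAcoe, h', neg_smul, one_smul]

/-- For a primitive hyperbolic element `g` of a Fuchsian group `Γ` and a
nonzero integer `n`, `g` is reciprocal in `Γ` iff `gⁿ` is reciprocal in `Γ`. -/
theorem primitive_hyperbolic_reciprocal_iff_zpow_reciprocal
    (Γ : Subgroup PSL2R) [DiscreteTopology Γ] (g : PSL2R) (hg : g ∈ Γ)
    (hhyp : IsHyperbolic g)
    (hprim : ¬ ∃ b ∈ Γ, ∃ k : ℤ, 1 < |k| ∧ g = b ^ k)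
    (n : ℤ) (hn : n ≠ 0) :
    (∃ h ∈ Γ, h * g * h⁻¹ = g⁻¹) ↔ ∃ h ∈ Γ, h * g ^ n * h⁻¹ = (g ^ n)⁻¹ := by
  constructor
  · rintro ⟨h, hhΓ, hrel⟩
    refine ⟨h, hhΓ, ?_⟩
    calc h * g ^ n * h⁻¹ = (MulAut.conj h) (g ^ n) := by simp [MulAut.conj_apply]
      _ = ((MulAut.conj h) g) ^ n := map_zpow _ _ _
      _ = (h * g * h⁻¹) ^ n := by simp [MulAut.conj_apply]
      _ = (g⁻¹) ^ n := by rw [hrel]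
      _ = (g ^ n)⁻¹ := inv_zpow g n
  · rintro ⟨h, hhΓ, hrel⟩
    refine ⟨h, hhΓ, ?_⟩
    obtain ⟨A, hAg, htr⟩ := hhyp
    obtain ⟨H, hH⟩ := QuotientGroup.mk_surjective h
    set X := H * A * H⁻¹ with hXdef
    have hpslX : psl X = h * g * h⁻¹ := by
      simp only [psl, hXdef, QuotientGroup.mk_mul, QuotientGroup.mk_inv]
      rw [show (QuotientGroup.mk A : PSL2R) = g from hAg, hH]
    have hx : (h * g * h⁻¹) ^ n = (g ^ n)⁻¹ := by
      calc (h * g * h⁻¹) ^ n = ((MulAut.conj h) g) ^ n := by simp [MulAut.conj_apply]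
        _ = (MulAut.conj h) (g ^ n) := (map_zpow _ _ _).symm
        _ = h * g ^ n * h⁻¹ := by simp [MulAut.conj_apply]
        _ = (g ^ n)⁻¹ := hrel
    have hzn : psl (X ^ n * A ^ n) = 1 := by
      calc psl (X ^ n * A ^ n) = (psl X) ^ n * (psl A) ^ n := by
            simp only [psl, QuotientGroup.mk_mul, QuotientGroup.mk_zpow]
        _ = (h * g * h⁻¹) ^ n * g ^ n := by rw [hpslX, hAg]
        _ = (g ^ n)⁻¹ * g ^ n := by rw [hx]
        _ = 1 := inv_mul_cancel _
    have hmem : X ^ n * A ^ n ∈ Subgroup.center SL2R := (QuotientGroup.eq_one_iff _).mp hzn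
    set m := n.natAbs with hmdef
    have hm : 0 < m := Int.natAbs_pos.mpr hn
    have hmemN : X ^ m * A ^ m ∈ Subgroup.center SL2R := by
      rcases Int.natAbs_eq n with he | he
      · rw [he, zpow_natCast, zpow_natCast] at hmem
        exact hmem
      · rw [he] at hmem
        have h2 : (X ^ (-(m : ℤ)) * A ^ (-(m : ℤ)))⁻¹ ∈ Subgroup.center SL2R :=
          Subgroup.inv_mem _ hmem
        have h3 : (X ^ (-(m : ℤ)) * A ^ (-(m : ℤ)))⁻¹ = A ^ m * X ^ m := by
          rw [mul_inv_rev, zpow_neg, zpow_neg, inv_inv, inv_inv, zpow_natCast, zpow_natCast]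
        rw [h3] at h2
        have h4 : X ^ m * A ^ m = X ^ m * (A ^ m * X ^ m) * (X ^ m)⁻¹ := by group
        rw [h4, Subgroup.mem_center_iff.mp h2 (X ^ m), mul_inv_cancel_right]
        exact h2
    have hXA : X * A ∈ Subgroup.center SL2R := key_root A X htr m hm hmemN
    have h5 : psl (X * A) = 1 := (QuotientGroup.eq_one_iff _).mpr hXA
    have h6 : (h * g * h⁻¹) * g = 1 := by
      rw [← hpslX, ← hAg]
      calc psl X * psl A = psl (X * A) := (QuotientGroup.mk_mul (N := Subgroup.center SL2R) X A).symm
        _ = 1 := h5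
    calc h * g * h⁻¹ = ((h * g * h⁻¹) * g) * g⁻¹ := by group
      _ = g⁻¹ := by rw [h6, one_mul]
end
end

section
/- Let A = [[a,b],[c,d]] ∈ SL(2,ℝ) with |trace(A)| > 2 and a ≠ d, and set θ = (b-c)/(a-d). If |θ| < 1, then the matrix Φ = (1/√(1-θ²))·[[θ, 1],[-1, -θ]] lies in SL(2,ℝ) (it has determinant 1) and satisfies Φ*A*Φ⁻¹ = A⁻¹. -/
noncomputable section

/-- If `A ∈ SL(2,ℝ)` is hyperbolic with `a ≠ d` and `θ = (b-c)/(a-d)`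
satisfies `|θ| < 1`, then `Φ = (1/√(1-θ²))·[[θ,1],[-1,-θ]]` has determinant 1 and
conjugates `A` to `A⁻¹`. -/
theorem reciprocator_of_small_theta (A : SL2R)
    (htr : 2 < |Matrix.trace (A : Matrix (Fin 2) (Fin 2) ℝ)|)
    (hd : A.1 0 0 ≠ A.1 1 1)
    (θ : ℝ) (hθ : θ = (A.1 0 1 - A.1 1 0) / (A.1 0 0 - A.1 1 1))
    (hsmall : |θ| < 1)
    (Φ : Matrix (Fin 2) (Fin 2) ℝ)
    (hΦ : Φ = (Real.sqrt (1 - θ ^ 2))⁻¹ • !![θ, 1; -1, -θ]) :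
    Φ.det = 1 ∧
      Φ * (A : Matrix (Fin 2) (Fin 2) ℝ) * Φ⁻¹ = ((A⁻¹ : SL2R) : Matrix (Fin 2) (Fin 2) ℝ) := by
  obtain ⟨h1, h2⟩ := abs_lt.mp hsmall
  have hpos : (0:ℝ) < 1 - θ ^ 2 := by nlinarith
  have hs : Real.sqrt (1 - θ ^ 2) ^ 2 = 1 - θ ^ 2 := Real.sq_sqrt hpos.le
  have hs0 : Real.sqrt (1 - θ ^ 2) ≠ 0 := by positivity
  have hkey : θ * (A.1 0 0 - A.1 1 1) = A.1 0 1 - A.1 1 0 := by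
    rw [hθ, div_mul_cancel₀]
    exact sub_ne_zero.mpr hd
  have hA : (A : Matrix (Fin 2) (Fin 2) ℝ) = !![A.1 0 0, A.1 0 1; A.1 1 0, A.1 1 1] := by
    ext i j; fin_cases i <;> fin_cases j <;> rfl
  have hdet : Φ.det = 1 := by
    rw [hΦ, Matrix.det_smul, Matrix.det_fin_two_of]
    simp only [Fintype.card_fin]
    field_simp
    nlinarith [hs]
  refine ⟨hdet, ?_⟩
  have hmul : Φ * (A : Matrix (Fin 2) (Fin 2) ℝ) =
      ((A⁻¹ : SL2R) : Matrix (Fin 2) (Fin 2) ℝ) * Φ := by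
    rw [Matrix.SpecialLinearGroup.coe_inv, hA, hΦ, Matrix.adjugate_fin_two_of,
      Matrix.smul_mul, Matrix.mul_smul, Matrix.mul_fin_two, Matrix.mul_fin_two]
    congr 1
    ext i j
    fin_cases i <;> fin_cases j <;>
      simp only [Fin.mk_zero, Fin.mk_one, Matrix.cons_val_zero, Matrix.cons_val_one,
        Matrix.head_cons, Matrix.cons_val', Matrix.empty_val', Matrix.cons_val_fin_one,
        Matrix.of_apply, Fin.isValue, Matrix.vecHead] <;> linarith [hkey]
  have hunit : IsUnit Φ.det := by rw [hdet]; exact isUnit_one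
  calc Φ * (A : Matrix (Fin 2) (Fin 2) ℝ) * Φ⁻¹
      = ((A⁻¹ : SL2R) : Matrix (Fin 2) (Fin 2) ℝ) * (Φ * Φ⁻¹) := by rw [hmul, Matrix.mul_assoc]
    _ = ((A⁻¹ : SL2R) : Matrix (Fin 2) (Fin 2) ℝ) := by
        rw [Matrix.mul_nonsing_inv _ hunit, Matrix.mul_one]
end
end

section
/- Let A ∈ SL(2,ℝ) with |trace(A)| > 2 and let k be a nonzero integer. Then A^k is a symmetric matrix if and only if A is a symmetric matrix. -/
noncomputable section

lemma sl2_sq (A : SL2R) :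
    A.1 * A.1 = (A.1 0 0 + A.1 1 1) • A.1 - 1 := by
  have hdet : A.1 0 0 * A.1 1 1 - A.1 0 1 * A.1 1 0 = 1 := by
    have := A.2; rwa [Matrix.det_fin_two] at this
  ext i j
  fin_cases i <;> fin_cases j <;>
    simp [Matrix.mul_apply, Fin.sum_univ_two, Matrix.one_apply] <;> nlinarith [hdet]

lemma pow_rep (A : SL2R) (ht : 2 < |A.1 0 0 + A.1 1 1|) (n : ℕ) :
    ∃ u v u' : ℝ, |u| < |u'| ∧ (A ^ n).1 = u • A.1 + v • 1 ∧
      (A ^ (n + 1)).1 = u' • A.1 + (-u) • 1 := by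
  induction n with
  | zero =>
      exact ⟨0, 1, 1, by norm_num, by simp, by simp⟩
  | succ n ih =>
      obtain ⟨u, v, u', huu, h1, h2⟩ := ih
      refine ⟨u', -u, (A.1 0 0 + A.1 1 1) * u' - u, ?_, h2, ?_⟩
      · have h3 : 2 * |u'| ≤ |A.1 0 0 + A.1 1 1| * |u'| := by
          apply mul_le_mul_of_nonneg_right (le_of_lt ht) (abs_nonneg _)
        calc |u'| < 2 * |u'| - |u| := by
              have := abs_nonneg u; linarith
          _ ≤ |A.1 0 0 + A.1 1 1| * |u'| - |u| := by linarith
          _ = |(A.1 0 0 + A.1 1 1) * u'| - |u| := by rw [abs_mul]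
          _ ≤ |(A.1 0 0 + A.1 1 1) * u' - u| := abs_sub_abs_le_abs_sub _ _
      · have : (A ^ (n + 1 + 1)).1 = (A ^ (n + 1)).1 * A.1 := by
          rw [pow_succ]; rfl
        rw [this, h2, add_mul, smul_mul_assoc, smul_mul_assoc, sl2_sq A, one_mul,
          smul_sub, smul_smul]
        ext i j
        simp [Matrix.add_apply, Matrix.sub_apply, Matrix.smul_apply]
        ring

lemma pow_sym_iff (A : SL2R) (ht : 2 < |A.1 0 0 + A.1 1 1|) (n : ℕ) (hn : n ≠ 0) :
    (A ^ n).1 0 1 = (A ^ n).1 1 0 ↔ A.1 0 1 = A.1 1 0 := by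
  obtain ⟨m, rfl⟩ := Nat.exists_eq_succ_of_ne_zero hn
  obtain ⟨u, v, u', huu, h1, h2⟩ := pow_rep A ht m
  have hu' : u' ≠ 0 := by
    intro h; rw [h] at huu; simp at huu; exact absurd huu (abs_nonneg u).not_gt
  have e1 : (A ^ (m + 1)).1 0 1 = u' * A.1 0 1 := by
    rw [h2]; simp [Matrix.one_apply]
  have e2 : (A ^ (m + 1)).1 1 0 = u' * A.1 1 0 := by
    rw [h2]; simp [Matrix.one_apply]
  rw [e1, e2, mul_right_inj' hu']


/-- For hyperbolic `A ∈ SL(2,ℝ)` and nonzero integer `k`, `A^k` is a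
symmetric matrix iff `A` is. -/
theorem zpow_symmetric_iff_symmetric (A : SL2R)
    (htr : 2 < |Matrix.trace (A : Matrix (Fin 2) (Fin 2) ℝ)|)
    (k : ℤ) (hk : k ≠ 0) :
    (A ^ k).1 0 1 = (A ^ k).1 1 0 ↔ A.1 0 1 = A.1 1 0 := by
  have ht : 2 < |A.1 0 0 + A.1 1 1| := by rwa [Matrix.trace_fin_two] at htr
  obtain ⟨n, rfl | rfl⟩ := k.eq_nat_or_neg
  · have hn : n ≠ 0 := by rintro rfl; simp at hk
    rw [zpow_natCast]; exact pow_sym_iff A ht n hn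
  · have hn : n ≠ 0 := by rintro rfl; simp at hk
    rw [zpow_neg, zpow_natCast, Matrix.SpecialLinearGroup.SL2_inv_expl]
    simp only [neg_eq_iff_eq_neg, neg_neg]
    rw [eq_comm, ← pow_sym_iff A ht n hn]
    constructor <;> intro h <;> simp_all
end
end

section
/- Let p = 2m with m ≥ 2 an integer and let g be a hyperbolic element of the Hecke group Γ_p that is reciprocal in Γ_p. Then every reciprocator of g is conjugate in Γ_p to ι or to γ_p^m: for every h ∈ Γ_p with h*g*h⁻¹ = g⁻¹ there exists t ∈ Γ_p with t*h*t⁻¹ = ι or t*h*t⁻¹ = γ_p^m. -/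
noncomputable section

-- center of SL2R
lemma mem_center_SL2R {A : SL2R} : A ∈ Subgroup.center SL2R ↔ A = 1 ∨ A = -1 := by
  rw [Matrix.SpecialLinearGroup.mem_center_iff]
  constructor
  · rintro ⟨r, hr, hA⟩
    rw [Fintype.card_fin] at hr
    have hro : (r - 1) * (r + 1) = 0 := by nlinarith [hr]
    rcases mul_eq_zero.1 hro with h | h
    · left
      have : r = 1 := by linarith
      subst this
      ext i j
      rw [← hA]
      simp [Matrix.scalar_apply, Matrix.one_apply, Matrix.diagonal]
    · right
      have : r = -1 := by linarith
      subst this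
      ext i j
      rw [← hA, Matrix.SpecialLinearGroup.coe_neg]
      simp [Matrix.scalar_apply, Matrix.one_apply, Matrix.diagonal, Matrix.neg_apply]
      split <;> simp
  · rintro (rfl | rfl)
    · exact ⟨1, by norm_num, by simp⟩
    · refine ⟨-1, by norm_num, ?_⟩
      ext i j
      rw [Matrix.SpecialLinearGroup.coe_neg]
      simp [Matrix.scalar_apply, Matrix.one_apply, Matrix.diagonal, Matrix.neg_apply]
      split <;> simp

lemma psl_mul (A B : SL2R) : psl (A * B) = psl A * psl B := rfl

lemma psl_eq_one_iff {A : SL2R} : psl A = 1 ↔ A = 1 ∨ A = -1 := by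
  rw [psl, QuotientGroup.eq_one_iff, mem_center_SL2R]

lemma psl_neg (A : SL2R) : psl (-A) = psl A := by
  rw [show (-A : SL2R) = A * (-1) by rw [mul_neg_one], psl_mul,
    psl_eq_one_iff.2 (Or.inr rfl), mul_one]

lemma psl_eq_iff {A B : SL2R} : psl A = psl B ↔ B = A ∨ B = -A := by
  constructor
  · intro h
    have h1 : psl (A⁻¹ * B) = 1 := by
      rw [psl_mul, ← h]
      simp [psl]
    rcases psl_eq_one_iff.1 h1 with h1 | h1
    · left
      have := congrArg (A * ·) h1
      simp only [← mul_assoc, mul_inv_cancel, one_mul, mul_one] at this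
      exact this
    · right
      have := congrArg (A * ·) h1
      simp only [← mul_assoc, mul_inv_cancel, one_mul, mul_neg_one] at this
      exact this
  · rintro (rfl | rfl)
    · rfl
    · exact (psl_neg A).symm

lemma psl_inv (A : SL2R) : (psl A)⁻¹ = psl A⁻¹ := rfl

-- trace of inverse in SL2
lemma trace_inv_SL2 (A : SL2R) :
    Matrix.trace ((A⁻¹ : SL2R) : Matrix (Fin 2) (Fin 2) ℝ) =
      Matrix.trace ((A : SL2R) : Matrix (Fin 2) (Fin 2) ℝ) := by
  rw [Matrix.SpecialLinearGroup.SL2_inv_expl A]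
  simp [Matrix.trace, Matrix.diag, Fin.sum_univ_two]
  ring

/-- Main involution lemma: a reciprocator of a hyperbolic element is an involution. -/
lemma reciprocator_involution {G H : SL2R}
    (htr : 2 < |Matrix.trace ((G : SL2R) : Matrix (Fin 2) (Fin 2) ℝ)|)
    (hconj : psl H * psl G * (psl H)⁻¹ = (psl G)⁻¹) :
    H * H = -1 := by
  -- lift the equation to SL2R
  have h1 : psl (H * G * H⁻¹) = psl G⁻¹ := by
    rw [psl_mul, psl_mul, ← psl_inv, ← psl_inv, hconj]
  rcases psl_eq_iff.1 h1 with h2 | h2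
  · -- G⁻¹ = H G H⁻¹ : the main case
    -- entries
    set a := G.1 0 0 with ha
    set b := G.1 0 1 with hb
    set c := G.1 1 0 with hc
    set d := G.1 1 1 with hd
    set e := H.1 0 0 with he
    set f := H.1 0 1 with hf
    set g := H.1 1 0 with hg
    set k := H.1 1 1 with hk
    have hdetG : a * d - b * c = 1 := by
      have := G.2
      rwa [Matrix.det_fin_two] at this
    have hdetH : e * k - f * g = 1 := by
      have := H.2
      rwa [Matrix.det_fin_two] at this
    -- H * G = G⁻¹ * H
    have h3 : H * G = G⁻¹ * H := by
      have := congrArg (· * H) h2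
      simpa [mul_assoc] using this.symm
    have h4 : (H * G).1 = (G⁻¹ * H).1 := congrArg _ h3
    have hGinv : (G⁻¹ : SL2R).1 = !![d, -b; -c, a] := by
      rw [Matrix.SpecialLinearGroup.SL2_inv_expl G]
      ext i j
      fin_cases i <;> fin_cases j <;> simp [ha, hb, hc, hd]
    -- extract the four entries
    have E1 : e * a + f * c = d * e + (-b) * g := by
      have := congrFun (congrFun h4 0) 0
      simpa [Matrix.SpecialLinearGroup.coe_mul, Matrix.mul_apply, Fin.sum_univ_two, hGinv,
        ← ha, ← hb, ← hc, ← hd, ← he, ← hf, ← hg, ← hk] using this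
    have E2 : e * b + f * d = d * f + (-b) * k := by
      have := congrFun (congrFun h4 0) 1
      simpa [Matrix.SpecialLinearGroup.coe_mul, Matrix.mul_apply, Fin.sum_univ_two, hGinv,
        ← ha, ← hb, ← hc, ← hd, ← he, ← hf, ← hg, ← hk] using this
    have E3 : g * a + k * c = (-c) * e + a * g := by
      have := congrFun (congrFun h4 1) 0
      simpa [Matrix.SpecialLinearGroup.coe_mul, Matrix.mul_apply, Fin.sum_univ_two, hGinv,
        ← ha, ← hb, ← hc, ← hd, ← he, ← hf, ← hg, ← hk] using this
    have E4 : g * b + k * d = (-c) * f + a * k := by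
      have := congrFun (congrFun h4 1) 1
      simpa [Matrix.SpecialLinearGroup.coe_mul, Matrix.mul_apply, Fin.sum_univ_two, hGinv,
        ← ha, ← hb, ← hc, ← hd, ← he, ← hf, ← hg, ← hk] using this
    have htr' : 2 < |a + d| := by
      rwa [Matrix.trace_fin_two] at htr
    -- derive e + k = 0
    have hs : e + k = 0 := by
      by_contra hs
      have hb0 : b = 0 := by
        have : b * (e + k) = 0 := by linarith [E2]
        rcases mul_eq_zero.1 this with h | h
        · exact h
        · exact absurd h hs
      have hc0 : c = 0 := by
        have : c * (e + k) = 0 := by linarith [E3]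
        rcases mul_eq_zero.1 this with h | h
        · exact h
        · exact absurd h hs
      have had : (a - d) * (e + k) = 0 := by
        have := E1
        have := E4
        nlinarith [E1, E4]
      have had' : a = d := by
        rcases mul_eq_zero.1 had with h | h
        · linarith
        · exact absurd h hs
      rw [hb0, hc0, had'] at hdetG
      have hd2 : (d - 1) * (d + 1) = 0 := by nlinarith
      rcases mul_eq_zero.1 hd2 with h | h
      · have : d = 1 := by linarith
        rw [had', this] at htr'
        norm_num at htr'
      · have : d = -1 := by linarith
        rw [had', this] at htr'
        norm_num at htr'
    -- conclude H² = -1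
    ext i j
    fin_cases i <;> fin_cases j
    · show (H * H).1 0 0 = (-1 : SL2R).1 0 0
      simp only [Matrix.SpecialLinearGroup.coe_mul, Matrix.SpecialLinearGroup.coe_neg,
        Matrix.mul_apply, Fin.sum_univ_two, Matrix.neg_apply, Matrix.one_apply_eq,
        ← he, ← hf, ← hg, ← hk, Matrix.SpecialLinearGroup.coe_one, Matrix.one_apply]
      linear_combination e * hs - hdetH
    · show (H * H).1 0 1 = (-1 : SL2R).1 0 1
      simp only [Matrix.SpecialLinearGroup.coe_mul, Matrix.SpecialLinearGroup.coe_neg,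
        Matrix.mul_apply, Fin.sum_univ_two, Matrix.neg_apply, ← he, ← hf, ← hg, ← hk, Matrix.SpecialLinearGroup.coe_one, Matrix.one_apply]
      rw [if_neg (by decide : ¬ (0 : Fin 2) = 1)]
      linear_combination f * hs
    · show (H * H).1 1 0 = (-1 : SL2R).1 1 0
      simp only [Matrix.SpecialLinearGroup.coe_mul, Matrix.SpecialLinearGroup.coe_neg,
        Matrix.mul_apply, Fin.sum_univ_two, Matrix.neg_apply, ← he, ← hf, ← hg, ← hk, Matrix.SpecialLinearGroup.coe_one, Matrix.one_apply]
      rw [if_neg (by decide : ¬ (1 : Fin 2) = 0)]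
      linear_combination g * hs
    · show (H * H).1 1 1 = (-1 : SL2R).1 1 1
      simp only [Matrix.SpecialLinearGroup.coe_mul, Matrix.SpecialLinearGroup.coe_neg,
        Matrix.mul_apply, Fin.sum_univ_two, Matrix.neg_apply, Matrix.one_apply_eq,
        ← he, ← hf, ← hg, ← hk, Matrix.SpecialLinearGroup.coe_one, Matrix.one_apply]
      linear_combination k * hs - hdetH
  · -- G⁻¹ = -(H G H⁻¹) : contradiction via traces
    exfalso
    have h5 : (H * G * H⁻¹ : SL2R) = -G⁻¹ := by rw [h2, neg_neg]
    have htr1 : Matrix.trace ((H * G * H⁻¹ : SL2R) : Matrix (Fin 2) (Fin 2) ℝ) =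
        Matrix.trace ((G : SL2R) : Matrix (Fin 2) (Fin 2) ℝ) := by
      rw [show (H * G * H⁻¹ : SL2R) = H * (G * H⁻¹) by group]
      rw [Matrix.SpecialLinearGroup.coe_mul, Matrix.trace_mul_comm,
        ← Matrix.SpecialLinearGroup.coe_mul]
      congr 1
      group
    rw [h5, Matrix.SpecialLinearGroup.coe_neg, Matrix.trace_neg, trace_inv_SL2] at htr1
    have : Matrix.trace ((G : SL2R) : Matrix (Fin 2) (Fin 2) ℝ) = 0 := by linarith
    rw [this] at htr
    norm_num at htr


------------------------------------------------------------------
-- Powers of S*T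
------------------------------------------------------------------

lemma psl_pow (A : SL2R) (k : ℕ) : psl (A ^ k) = (psl A) ^ k :=
  QuotientGroup.mk_pow _ A k

lemma ST_coe (p : ℕ) : ((Sm * Tm p : SL2R) : Matrix (Fin 2) (Fin 2) ℝ) =
    !![0, -1; 1, 2 * Real.cos (Real.pi / p)] := by
  ext i j
  rw [Matrix.SpecialLinearGroup.coe_mul]
  fin_cases i <;> fin_cases j <;>
    simp [Sm, Tm, Matrix.SpecialLinearGroup.coe_mul, Matrix.mul_apply, Fin.sum_univ_two]

section STpow

variable {p : ℕ} (hp : 2 ≤ p)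

lemma theta_pos (hp : 2 ≤ p) : 0 < Real.pi / p :=
  div_pos Real.pi_pos (by positivity)

lemma theta_lt_pi (hp : 2 ≤ p) : Real.pi / p < Real.pi := by
  have hpr : (1 : ℝ) < p := by exact_mod_cast Nat.lt_of_lt_of_le Nat.one_lt_two hp
  rw [div_lt_iff₀ (by positivity)]
  nlinarith [Real.pi_pos]

lemma sinθ_pos (hp : 2 ≤ p) : 0 < Real.sin (Real.pi / p) :=
  Real.sin_pos_of_pos_of_lt_pi (theta_pos hp) (theta_lt_pi hp)

/-- The Chebyshev-type formula for powers of `S*T`. -/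
lemma ST_pow_coe (hp : 2 ≤ p) (k : ℕ) :
    (((Sm * Tm p) ^ k : SL2R) : Matrix (Fin 2) (Fin 2) ℝ) =
      !![-(Real.sin (((k : ℝ) - 1) * (Real.pi / p)) / Real.sin (Real.pi / p)),
         -(Real.sin ((k : ℝ) * (Real.pi / p)) / Real.sin (Real.pi / p));
         Real.sin ((k : ℝ) * (Real.pi / p)) / Real.sin (Real.pi / p),
         Real.sin (((k : ℝ) + 1) * (Real.pi / p)) / Real.sin (Real.pi / p)] := by
  have hc := sinθ_pos hp
  set θ := Real.pi / p with hθ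
  induction k with
  | zero =>
    ext i j
    fin_cases i <;> fin_cases j <;>
      simp [Matrix.one_apply, Real.sin_neg] <;>
      field_simp
  | succ k ih =>
    have key : ∀ x : ℝ, Real.sin (x + θ) = 2 * Real.cos θ * Real.sin x - Real.sin (x - θ) := by
      intro x
      rw [Real.sin_add, Real.sin_sub]
      ring
    rw [pow_succ, Matrix.SpecialLinearGroup.coe_mul, ih, ST_coe, ← hθ]
    ext i j
    fin_cases i <;> fin_cases j <;>
      simp only [Matrix.mul_apply, Fin.sum_univ_two, Matrix.cons_val', Matrix.cons_val_zero,
        Matrix.cons_val_one, Matrix.head_cons, Matrix.head_fin_const, Matrix.empty_val',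
        Matrix.cons_val_fin_one, Nat.cast_succ, Matrix.of_apply, Fin.zero_eta, Fin.mk_one] <;>
      [skip;
       (rw [show ((k : ℝ) + 1) * θ = ((k : ℝ) * θ) + θ by ring,
           show (k : ℝ) * θ = ((k:ℝ) + 1 - 1) * θ by ring, key]);
       skip;
       (rw [show ((k : ℝ) + 1 + 1) * θ = (((k : ℝ) + 1) * θ) + θ by ring, key])] <;>
      field_simp <;> ring

lemma ST_pow_p (hp : 2 ≤ p) : ((Sm * Tm p) ^ p : SL2R) = -1 := by
  have hc := sinθ_pos hp
  have hp0 : (p : ℝ) ≠ 0 := by positivity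
  ext i j
  rw [ST_pow_coe hp p]
  have e1 : ((p : ℝ) - 1) * (Real.pi / p) = Real.pi - Real.pi / p := by
    field_simp
  have e2 : (p : ℝ) * (Real.pi / p) = Real.pi := by field_simp
  have e3 : ((p : ℝ) + 1) * (Real.pi / p) = Real.pi + Real.pi / p := by
    field_simp
  rw [e1, e2, e3, Real.sin_pi_sub, Real.sin_pi, Real.sin_add, Real.sin_pi, Real.cos_pi]
  fin_cases i <;> fin_cases j <;>
    simp [Matrix.SpecialLinearGroup.coe_neg, Matrix.SpecialLinearGroup.coe_one,
      Matrix.neg_apply, Matrix.one_apply] <;>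
    field_simp <;> exact hc.ne'

lemma Sm_sq : (Sm * Sm : SL2R) = -1 := by
  ext i j
  rw [Matrix.SpecialLinearGroup.coe_mul]
  fin_cases i <;> fin_cases j <;>
    simp [Sm, Matrix.SpecialLinearGroup.coe_mul, Matrix.SpecialLinearGroup.coe_neg,
      Matrix.SpecialLinearGroup.coe_one, Matrix.mul_apply, Fin.sum_univ_two,
      Matrix.neg_apply, Matrix.one_apply]

lemma iota_sq : iota * iota = 1 := by
  rw [iota, ← psl_mul, Sm_sq]
  exact psl_eq_one_iff.2 (Or.inr rfl)

lemma gammaP_pow_p (hp : 2 ≤ p) : (gammaP p) ^ p = 1 := by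
  rw [gammaP, ← psl_pow, ST_pow_p hp]
  exact psl_eq_one_iff.2 (Or.inr rfl)

end STpow

------------------------------------------------------------------
-- The action of PSL2R on the projective line
------------------------------------------------------------------

abbrev PP := Projectivization ℝ (Fin 2 → ℝ)

lemma mulVecLin_inj (A : SL2R) : Function.Injective (Matrix.mulVecLin (A : Matrix (Fin 2) (Fin 2) ℝ)) := by
  intro v w h
  simp only [Matrix.mulVecLin_apply] at h
  have h2 := congrArg (Matrix.mulVec ((A⁻¹ : SL2R) : Matrix (Fin 2) (Fin 2) ℝ)) h
  rwa [Matrix.mulVec_mulVec, Matrix.mulVec_mulVec, ← Matrix.SpecialLinearGroup.coe_mul,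
    inv_mul_cancel, Matrix.SpecialLinearGroup.coe_one, Matrix.one_mulVec,
    Matrix.one_mulVec] at h2

def pact (A : SL2R) : PP → PP :=
  Projectivization.map (Matrix.mulVecLin (A : Matrix (Fin 2) (Fin 2) ℝ)) (mulVecLin_inj A)

lemma mulVec_ne_zero (A : SL2R) {v : Fin 2 → ℝ} (hv : v ≠ 0) :
    Matrix.mulVec (A : Matrix (Fin 2) (Fin 2) ℝ) v ≠ 0 := by
  intro h
  apply hv
  apply mulVecLin_inj A
  simp [Matrix.mulVecLin_apply, h]

lemma pact_mk (A : SL2R) (v : Fin 2 → ℝ) (hv : v ≠ 0) :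
    pact A (Projectivization.mk ℝ v hv) =
      Projectivization.mk ℝ (Matrix.mulVec (A : Matrix (Fin 2) (Fin 2) ℝ) v)
        (mulVec_ne_zero A hv) := by
  rw [pact, Projectivization.map_mk]
  rfl

lemma pact_mul (A B : SL2R) (x : PP) : pact (A * B) x = pact A (pact B x) := by
  induction x using Projectivization.ind with
  | h v hv =>
    rw [pact_mk, pact_mk, pact_mk, Projectivization.mk_eq_mk_iff']
    exact ⟨1, by rw [one_smul, Matrix.mulVec_mulVec, Matrix.SpecialLinearGroup.coe_mul]⟩

lemma pact_one (x : PP) : pact 1 x = x := by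
  induction x using Projectivization.ind with
  | h v hv =>
    rw [pact_mk, Projectivization.mk_eq_mk_iff']
    exact ⟨1, by simp [Matrix.SpecialLinearGroup.coe_one, Matrix.one_mulVec]⟩

lemma pact_neg_one (x : PP) : pact (-1) x = x := by
  induction x using Projectivization.ind with
  | h v hv =>
    rw [pact_mk, Projectivization.mk_eq_mk_iff']
    refine ⟨-1, ?_⟩
    ext i
    simp only [Pi.smul_apply, smul_eq_mul, Matrix.SpecialLinearGroup.coe_neg,
      Matrix.SpecialLinearGroup.coe_one, Matrix.mulVec, dotProduct,
      Fin.sum_univ_two, Matrix.neg_apply, Matrix.one_apply]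
    fin_cases i <;> simp

instance PSLactPP : MulAction PSL2R PP where
  smul q x := Quotient.liftOn' q (fun A => pact A x) (by
    intro A B hAB
    have h1 : A⁻¹ * B ∈ Subgroup.center SL2R := QuotientGroup.leftRel_apply.1 hAB
    rcases mem_center_SL2R.1 h1 with h | h
    · have : B = A := by
        have := congrArg (A * ·) h
        simpa [← mul_assoc] using this
      rw [this]
    · have hB : B = A * (-1) := by
        have := congrArg (A * ·) h
        simp only [← mul_assoc, mul_inv_cancel, one_mul] at this
        simpa using this
      show pact A x = pact B x
      rw [hB, pact_mul, pact_neg_one])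
  one_smul x := pact_one x
  mul_smul q r x := by
    induction q using Quotient.inductionOn' with
    | h A =>
      induction r using Quotient.inductionOn' with
      | h B =>
        show pact (A * B) x = pact A (pact B x)
        exact pact_mul A B x

lemma psl_smul (A : SL2R) (x : PP) : (psl A) • x = pact A x := rfl

------------------------------------------------------------------
-- the ping-pong sets
------------------------------------------------------------------

def posP : Set PP := {x | 0 < x.rep 0 * x.rep 1}
def negP : Set PP := {x | x.rep 0 * x.rep 1 < 0}

lemma mem_posP_mk {v : Fin 2 → ℝ} (hv : v ≠ 0) :
    Projectivization.mk ℝ v hv ∈ posP ↔ 0 < v 0 * v 1 := by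
  obtain ⟨a, ha⟩ := Projectivization.exists_smul_eq_mk_rep ℝ v hv
  have h0 : (Projectivization.mk ℝ v hv).rep 0 = (a : ℝ) * v 0 := by rw [← ha]; rfl
  have h1 : (Projectivization.mk ℝ v hv).rep 1 = (a : ℝ) * v 1 := by rw [← ha]; rfl
  have ha0 : (a : ℝ) ≠ 0 := a.ne_zero
  constructor
  · intro h
    simp only [posP, Set.mem_setOf_eq, h0, h1] at h
    nlinarith [sq_nonneg (a : ℝ), sq_nonneg ((a:ℝ) * v 0), h]
  · intro h
    simp only [posP, Set.mem_setOf_eq, h0, h1]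
    have : (a:ℝ) * v 0 * ((a:ℝ) * v 1) = (a:ℝ)^2 * (v 0 * v 1) := by ring
    rw [this]
    positivity

lemma mem_negP_mk {v : Fin 2 → ℝ} (hv : v ≠ 0) :
    Projectivization.mk ℝ v hv ∈ negP ↔ v 0 * v 1 < 0 := by
  obtain ⟨a, ha⟩ := Projectivization.exists_smul_eq_mk_rep ℝ v hv
  have h0 : (Projectivization.mk ℝ v hv).rep 0 = (a : ℝ) * v 0 := by rw [← ha]; rfl
  have h1 : (Projectivization.mk ℝ v hv).rep 1 = (a : ℝ) * v 1 := by rw [← ha]; rfl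
  have ha0 : (a : ℝ) ≠ 0 := a.ne_zero
  have key : (a:ℝ) * v 0 * ((a:ℝ) * v 1) = (a:ℝ)^2 * (v 0 * v 1) := by ring
  have ha2 : 0 < (a:ℝ)^2 := by positivity
  constructor
  · intro h
    simp only [negP, Set.mem_setOf_eq, h0, h1, key] at h
    nlinarith
  · intro h
    simp only [negP, Set.mem_setOf_eq, h0, h1, key]
    nlinarith

------------------------------------------------------------------
-- Ping pong: the Hecke group is ℤ/2 * ℤ/p
------------------------------------------------------------------

open Monoid

section PingPong

variable (p : ℕ)

abbrev nn : Bool → ℕ := fun b => bif b then p else 2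

abbrev HH : Bool → Type := fun b => Multiplicative (ZMod (nn p b))

abbrev gele : Bool → PSL2R := fun b => bif b then gammaP p else iota

variable {p}

lemma nn_pos (hp : 3 ≤ p) (b : Bool) : 0 < nn p b := by
  cases b <;> simp [nn] <;> omega

lemma gele_order (hp : 3 ≤ p) (b : Bool) : gele p b ^ nn p b = 1 := by
  cases b
  · show iota ^ 2 = 1
    rw [pow_two, iota_sq]
  · show gammaP p ^ p = 1
    exact gammaP_pow_p (by omega)

def ff (hp : 3 ≤ p) (b : Bool) : HH p b →* PSL2R :=
  MonoidHom.mk' (fun x => gele p b ^ (Multiplicative.toAdd x).val)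
    (by
      haveI : NeZero (nn p b) := ⟨(nn_pos hp b).ne'⟩
      intro x y
      have h1 : (Multiplicative.toAdd (x * y)).val =
          ((Multiplicative.toAdd x).val + (Multiplicative.toAdd y).val) % nn p b := by
        rw [toAdd_mul, ZMod.val_add]
      show gele p b ^ (Multiplicative.toAdd (x * y)).val = _
      rw [h1, ← pow_eq_pow_mod _ (gele_order hp b), pow_add])

lemma ff_apply (hp : 3 ≤ p) (b : Bool) (x : HH p b) :
    ff hp b x = gele p b ^ (Multiplicative.toAdd x).val := rfl

-- the ping-pong sets
abbrev XX : Bool → Set PP := fun b => bif b then negP else posP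

lemma one_lt_nn (hp : 3 ≤ p) (b : Bool) : 1 < nn p b := by
  cases b <;> simp [nn] <;> omega

lemma toAdd_val_pos (hp : 3 ≤ p) {b : Bool} {x : HH p b} (hx : x ≠ 1) :
    0 < (Multiplicative.toAdd x).val ∧ (Multiplicative.toAdd x).val < nn p b := by
  haveI : NeZero (nn p b) := ⟨(nn_pos hp b).ne'⟩
  refine ⟨?_, ZMod.val_lt _⟩
  rcases Nat.eq_zero_or_pos (Multiplicative.toAdd x).val with h | h
  · exfalso
    apply hx
    have := (ZMod.val_eq_zero _).1 h
    have : Multiplicative.toAdd x = 0 := this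
    simpa using congrArg Multiplicative.ofAdd this
  · exact h

lemma gamma_pow_smul_pos (hp : 3 ≤ p) {k : ℕ} (hk1 : 1 ≤ k) (hk2 : k < p)
    {x : PP} (hx : x ∈ posP) : (gammaP p) ^ k • x ∈ negP := by
  have hp2 : 2 ≤ p := by omega
  have hc := sinθ_pos hp2
  set θ := Real.pi / p with hθ
  have hθpos := theta_pos hp2
  have hpθ : (p : ℝ) * θ = Real.pi := by
    rw [hθ]
    field_simp
  -- sign facts
  have hk2' : (k : ℝ) < p := by exact_mod_cast hk2
  have hk1' : (1 : ℝ) ≤ k := by exact_mod_cast hk1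
  have hsk : 0 < Real.sin ((k : ℝ) * θ) := by
    apply Real.sin_pos_of_pos_of_lt_pi
    · positivity
    · rw [← hpθ]
      exact mul_lt_mul_of_pos_right hk2' hθpos
  have hskm : 0 ≤ Real.sin (((k : ℝ) - 1) * θ) := by
    apply Real.sin_nonneg_of_nonneg_of_le_pi
    · have : (0:ℝ) ≤ (k:ℝ) - 1 := by linarith
      positivity
    · rw [← hpθ]
      apply mul_le_mul_of_nonneg_right _ hθpos.le
      linarith
  have hskp : 0 ≤ Real.sin (((k : ℝ) + 1) * θ) := by
    apply Real.sin_nonneg_of_nonneg_of_le_pi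
    · positivity
    · rw [← hpθ]
      apply mul_le_mul_of_nonneg_right _ hθpos.le
      have : (k : ℝ) + 1 ≤ p := by
        have : (k + 1 : ℕ) ≤ p := by omega
        exact_mod_cast this
      linarith
  -- compute the action
  induction x using Projectivization.ind with
  | h v hv =>
    rw [mem_posP_mk] at hx
    have hsmul : (gammaP p) ^ k • Projectivization.mk ℝ v hv =
        pact ((Sm * Tm p) ^ k) (Projectivization.mk ℝ v hv) := by
      rw [gammaP, ← psl_pow, psl_smul]
    rw [hsmul, pact_mk, mem_negP_mk]
    rw [ST_pow_coe hp2 k]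
    simp only [Matrix.mulVec, dotProduct, Fin.sum_univ_two, Matrix.cons_val', 
      Matrix.cons_val_zero, Matrix.cons_val_one, Matrix.head_cons, Matrix.empty_val',
      Matrix.cons_val_fin_one, Matrix.head_fin_const]
    set A := Real.sin (((k : ℝ) - 1) * θ) with hA
    set B := Real.sin ((k : ℝ) * θ) with hB
    set C := Real.sin (((k : ℝ) + 1) * θ) with hC
    set c := Real.sin θ with hcc
    simp only [Matrix.of_apply, Matrix.cons_val', Matrix.cons_val_zero, Matrix.cons_val_one,
      Matrix.head_cons, Matrix.empty_val', Matrix.cons_val_fin_one, Matrix.head_fin_const]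
    have hBc : 0 < B / c := div_pos hsk hc
    have hAc : 0 ≤ A / c := div_nonneg hskm hc.le
    have hCc : 0 ≤ C / c := div_nonneg hskp hc.le
    rcases mul_pos_iff.1 hx with ⟨h0, h1⟩ | ⟨h0, h1⟩
    · have w1pos : 0 < B / c * v 0 + C / c * v 1 :=
        add_pos_of_pos_of_nonneg (mul_pos hBc h0) (mul_nonneg hCc h1.le)
      have e1 : 0 ≤ A / c * v 0 := mul_nonneg hAc h0.le
      have e2 : 0 < B / c * v 1 := mul_pos hBc h1
      have w0neg : -(A / c) * v 0 + -(B / c) * v 1 < 0 := by nlinarith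
      nlinarith [mul_neg_of_neg_of_pos w0neg w1pos]
    · have e1 : B / c * v 0 < 0 := mul_neg_of_pos_of_neg hBc h0
      have e2 : C / c * v 1 ≤ 0 := mul_nonpos_of_nonneg_of_nonpos hCc h1.le
      have w1neg : B / c * v 0 + C / c * v 1 < 0 := by linarith
      have e3 : A / c * v 0 ≤ 0 := mul_nonpos_of_nonneg_of_nonpos hAc h0.le
      have e4 : B / c * v 1 < 0 := mul_neg_of_pos_of_neg hBc h1
      have w0pos : 0 < -(A / c) * v 0 + -(B / c) * v 1 := by nlinarith
      nlinarith [mul_neg_of_pos_of_neg w0pos w1neg]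

lemma iota_smul_neg {x : PP} (hx : x ∈ negP) : iota • x ∈ posP := by
  induction x using Projectivization.ind with
  | h v hv =>
    rw [mem_negP_mk] at hx
    rw [iota, psl_smul, pact_mk, mem_posP_mk]
    have h0 : Matrix.mulVec ((Sm : SL2R) : Matrix (Fin 2) (Fin 2) ℝ) v 0 = -(v 1) := by
      simp [Sm, Matrix.mulVec, dotProduct, Fin.sum_univ_two]
    have h1 : Matrix.mulVec ((Sm : SL2R) : Matrix (Fin 2) (Fin 2) ℝ) v 1 = v 0 := by
      simp [Sm, Matrix.mulVec, dotProduct, Fin.sum_univ_two]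
    rw [h0, h1]
    nlinarith

lemma Phi_injective (hp : 3 ≤ p) : Function.Injective (CoprodI.lift (ff hp)) := by
  classical
  apply CoprodI.lift_injective_of_ping_pong (ff hp) _ (XX)
  · -- nonempty
    intro b
    cases b
    · refine ⟨Projectivization.mk ℝ ![1, 1] (by
        intro h
        have := congrFun h 0
        norm_num at this), ?_⟩
      show _ ∈ posP
      rw [mem_posP_mk]
      norm_num
    · refine ⟨Projectivization.mk ℝ ![1, -1] (by
        intro h
        have := congrFun h 0
        norm_num at this), ?_⟩
      show _ ∈ negP
      rw [mem_negP_mk]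
      norm_num
  · -- disjoint
    have key : Disjoint posP negP := by
      rw [Set.disjoint_left]
      intro x hx hx'
      simp only [posP, Set.mem_setOf_eq] at hx
      simp only [negP, Set.mem_setOf_eq] at hx'
      linarith
    intro i j hij
    cases i <;> cases j
    · exact absurd rfl hij
    · show Disjoint posP negP
      exact key
    · show Disjoint negP posP
      exact key.symm
    · exact absurd rfl hij
  · -- ping pong condition
    intro i j hij h hne
    obtain ⟨hv1, hv2⟩ := toAdd_val_pos hp hne
    cases i
    · -- i = false : iota
      cases j
      · exact absurd rfl hij
      · intro x hx
        simp only [XX, cond_false, cond_true] at hx ⊢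
        obtain ⟨y, hy, rfl⟩ := hx
        have hval : (Multiplicative.toAdd h).val = 1 := by
          have := hv2
          simp only [nn, cond_false] at this
          omega
        rw [ff_apply, hval, pow_one]
        exact iota_smul_neg hy
    · cases j
      · intro x hx
        simp only [XX, cond_false, cond_true] at hx ⊢
        obtain ⟨y, hy, rfl⟩ := hx
        rw [ff_apply]
        have := hv2
        simp only [nn, cond_true] at this
        exact gamma_pow_smul_pos hp hv1 this hy
      · exact absurd rfl hij
  · -- cardinality
    right
    refine ⟨true, ?_⟩
    haveI : NeZero p := ⟨by omega⟩
    show (3 : Cardinal) ≤ Cardinal.mk (Multiplicative (ZMod p))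
    rw [Cardinal.mk_fintype, Fintype.card_multiplicative, ZMod.card]
    exact_mod_cast (by omega : 3 ≤ p)

end PingPong

------------------------------------------------------------------
-- Range of the ping-pong lift is the Hecke group
------------------------------------------------------------------

lemma gammaP_eq (p : ℕ) : gammaP p = iota * alphaP p := by
  rw [gammaP, psl_mul, iota, alphaP]

lemma iota_mem_Hecke (p : ℕ) : iota ∈ Hecke p :=
  Subgroup.subset_closure (Set.mem_insert _ _)

lemma alphaP_mem_Hecke (p : ℕ) : alphaP p ∈ Hecke p :=
  Subgroup.subset_closure (Set.mem_insert_of_mem _ rfl)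

lemma gammaP_mem_Hecke (p : ℕ) : gammaP p ∈ Hecke p := by
  rw [gammaP_eq]
  exact mul_mem (iota_mem_Hecke p) (alphaP_mem_Hecke p)

lemma alphaP_eq (p : ℕ) : alphaP p = iota * gammaP p := by
  rw [gammaP_eq, ← mul_assoc, iota_sq, one_mul]

lemma ff_one_false (hp : 3 ≤ p) :
    ff hp false (Multiplicative.ofAdd (1 : ZMod (nn p false))) = iota := by
  haveI : Fact (1 < nn p false) := ⟨one_lt_nn hp false⟩
  rw [ff_apply, toAdd_ofAdd, ZMod.val_one, pow_one]
  rfl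

lemma ff_one_true (hp : 3 ≤ p) :
    ff hp true (Multiplicative.ofAdd (1 : ZMod (nn p true))) = gammaP p := by
  haveI : Fact (1 < nn p true) := ⟨one_lt_nn hp true⟩
  rw [ff_apply, toAdd_ofAdd, ZMod.val_one, pow_one]
  rfl

lemma Phi_range (hp : 3 ≤ p) : (CoprodI.lift (ff hp)).range = Hecke p := by
  apply le_antisymm
  · rintro x ⟨y, rfl⟩
    induction y using CoprodI.induction_on with
    | one => simp only [map_one]; exact one_mem _
    | of i m =>
      rw [CoprodI.lift_of, ff_apply]
      apply pow_mem
      cases i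
      · exact iota_mem_Hecke p
      · exact gammaP_mem_Hecke p
    | mul x y hx hy =>
      rw [map_mul]
      exact mul_mem hx hy
  · rw [Hecke]
    rw [Subgroup.closure_le]
    rintro x (rfl | rfl)
    · exact ⟨CoprodI.of (Multiplicative.ofAdd (1 : ZMod (nn p false))), by
        rw [CoprodI.lift_of]
        exact ff_one_false hp⟩
    · show alphaP p ∈ _
      have h1 : (CoprodI.lift (ff hp)) (CoprodI.of (Multiplicative.ofAdd (1 : ZMod (nn p false)))) = iota := by
        rw [CoprodI.lift_of]; exact ff_one_false hp
      have h2 : (CoprodI.lift (ff hp)) (CoprodI.of (Multiplicative.ofAdd (1 : ZMod (nn p true)))) = gammaP p := by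
        rw [CoprodI.lift_of]; exact ff_one_true hp
      rw [alphaP_eq]
      exact mul_mem ⟨_, h1⟩ ⟨_, h2⟩

------------------------------------------------------------------
-- Torsion elements in free products are conjugate into a factor
------------------------------------------------------------------

section Torsion

open Monoid Monoid.CoprodI

variable {κ : Type*} {G : κ → Type*} [∀ i, Group (G i)]

lemma word_prod_ne_one [DecidableEq κ] [∀ i, DecidableEq (G i)]
    {w : Word G} (hw : w ≠ Word.empty) : w.prod ≠ 1 := by
  intro h
  apply hw
  have h1 : (Word.equiv (M := G)).symm w = w.prod := rfl
  have h2 : (Word.equiv (M := G)).symm Word.empty = (1 : CoprodI G) := Word.prod_empty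
  apply (Word.equiv (M := G)).symm.injective
  rw [h1, h2, h]

lemma neword_prod_ne_one [DecidableEq κ] [∀ i, DecidableEq (G i)]
    {i j : κ} (w : NeWord G i j) : w.prod ≠ 1 := by
  apply word_prod_ne_one
  intro h
  exact w.toList_ne_nil (congrArg Word.toList h)

lemma neword_sq_ne_one [DecidableEq κ] [∀ i, DecidableEq (G i)]
    {i j : κ} (hij : j ≠ i) (w : NeWord G i j) : w.prod * w.prod ≠ 1 := by
  have := neword_prod_ne_one (NeWord.append w hij w)
  rwa [NeWord.append_prod] at this

lemma torsion_main [DecidableEq κ] [∀ i, DecidableEq (G i)] :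
    ∀ (n : ℕ) (w : Word G), w.toList.length ≤ n → w ≠ Word.empty → w.prod * w.prod = 1 →
    ∃ (t : CoprodI G) (k : κ) (h : G k), h ≠ 1 ∧ t * w.prod * t⁻¹ = CoprodI.of h := by
  intro n
  induction n with
  | zero =>
    intro w hlen hne _
    exfalso
    apply hne
    ext1
    simpa using List.length_eq_zero_iff.1 (Nat.le_zero.1 hlen)
  | succ n ih =>
    intro w hlen hne hsq
    -- decompose w
    obtain ⟨i, j, nw, hnw⟩ := NeWord.of_word w (by exact hne)
    have hList : nw.toList = w.toList := congrArg Word.toList hnw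
    have hprod : nw.prod = w.prod := congrArg Word.prod hnw
    by_cases hij : i = j
    · -- head and last from the same factor
      subst hij
      -- look at the list of w
      have hLne : w.toList ≠ [] := by
        intro h
        apply hne
        ext1
        simpa using h
      obtain ⟨x, L', hL⟩ := List.exists_cons_of_ne_nil hLne
      have hx : x = ⟨i, nw.head⟩ := by
        have h1 := nw.toList_head?
        rw [hList, hL] at h1
        simpa using h1
      rcases eq_or_ne L' [] with hL' | hL'
      · -- singleton word
        refine ⟨1, i, nw.head, ?_, ?_⟩
        · have := w.ne_one x (by rw [hL]; exact List.mem_cons_self)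
          rw [hx] at this
          exact this
        · rw [one_mul, inv_one, mul_one]
          rw [Word.prod, hL, hL', hx]
          simp
      · -- length at least two
        -- last letter
        have hb : L'.getLast hL' = ⟨i, nw.last⟩ := by
          have h1 := nw.toList_getLast?
          rw [hList, hL] at h1
          rw [List.getLast?_cons, List.getLast?_eq_getLast hL'] at h1
          · simpa using h1
        set mid : List (Σ k, G k) := L'.dropLast with hmid
        have hL'decomp : mid ++ [(⟨i, nw.last⟩ : Σ k, G k)] = L' := by
          rw [hmid, ← hb]
          exact List.dropLast_append_getLast hL'
        -- the word of the middle part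
        have hmidsub : ∀ l ∈ mid, l ∈ w.toList := by
          intro l hl
          rw [hL]
          exact List.mem_cons_of_mem _ (List.dropLast_subset _ hl)
        have hchainL' : L'.IsChain (fun l l' => l.fst ≠ l'.fst) := by
          have := w.chain_ne
          rw [hL, List.isChain_cons] at this
          exact this.2
        refine (fun (wmid : Word G) (hwmidList : wmid.toList = mid) => ?_)
          ⟨mid, fun l hl => w.ne_one l (hmidsub l hl),
            hchainL'.prefix (by rw [hmid]; exact List.dropLast_prefix _)⟩ rfl
        set a := nw.head with hadef
        set b := nw.last with hbdef
        -- product decomposition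
        have key1 : w.prod = CoprodI.of a * (wmid.prod * CoprodI.of b) := by
          rw [Word.prod, Word.prod, hL, hx, ← hL'decomp, hwmidList]
          simp [List.map_append, List.prod_append, mul_assoc]
        have hwne1 : w.prod ≠ 1 := word_prod_ne_one hne
        -- conjugate by the last letter
        set z := CoprodI.of b * w.prod * (CoprodI.of b)⁻¹ with hzdef
        have hz : z = CoprodI.of (b * a) * wmid.prod := by
          rw [hzdef, key1, map_mul]
          group
        have hzsq : z * z = 1 := by
          rw [hzdef]
          have : CoprodI.of b * w.prod * (CoprodI.of b)⁻¹ * (CoprodI.of b * w.prod * (CoprodI.of b)⁻¹)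
              = CoprodI.of b * (w.prod * w.prod) * (CoprodI.of b)⁻¹ := by group
          rw [this, hsq]
          group
        have hzne : z ≠ 1 := by
          rw [hzdef]
          intro h
          apply hwne1
          have := congrArg (fun u => (CoprodI.of b)⁻¹ * u * CoprodI.of b) h
          simpa [mul_assoc] using this
        -- length bookkeeping
        have hlen1 : mid.length + 1 = L'.length := by
          rw [← hL'decomp]
          simp
        have hlen2 : L'.length ≤ n := by
          have : w.toList.length = L'.length + 1 := by rw [hL]; simp
          omega
        -- the final conjugation step, given data for z
        have final : (∃ (t : CoprodI G) (k : κ) (h : G k), h ≠ 1 ∧ t * z * t⁻¹ = CoprodI.of h) →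
            ∃ (t : CoprodI G) (k : κ) (h : G k), h ≠ 1 ∧ t * w.prod * t⁻¹ = CoprodI.of h := by
          rintro ⟨t', k, h, hh, ht⟩
          refine ⟨t' * CoprodI.of b, k, h, hh, ?_⟩
          rw [← ht, hzdef]
          group
        by_cases hba : b * a = 1
        · -- the end letters cancel
          have hzP : z = wmid.prod := by rw [hz, hba, map_one, one_mul]
          rcases eq_or_ne mid [] with hmidnil | hmidnil
          · exfalso
            apply hzne
            rw [hzP, Word.prod, hwmidList, hmidnil]
            simp
          · apply final
            rw [hzP]
            apply ih wmid
            · rw [hwmidList]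
              omega
            · intro h
              apply hmidnil
              rw [← hwmidList, h]
              rfl
            · rwa [hzP] at hzsq
        · -- the end letters merge into one letter
          have hfst : wmid.fstIdx ≠ some i := by
            rw [Word.fstIdx, hwmidList]
            rcases eq_or_ne mid [] with hmidnil | hmidnil
            · rw [hmidnil]
              simp
            · obtain ⟨y, mid', hy⟩ := List.exists_cons_of_ne_nil hmidnil
              have hheady : L'.head? = some y := by
                rw [← hL'decomp, hy]
                simp
              have hchain := w.chain_ne
              rw [hL, List.isChain_cons] at hchain
              have := hchain.1 y hheady
              rw [hx] at this
              rw [hy]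
              simp only [List.head?_cons, Option.map_some]
              intro hcon
              apply this
              simpa using hcon.symm
          apply final
          have hlist : (Word.cons (b * a) wmid hfst hba).toList = ⟨i, b * a⟩ :: wmid.toList := rfl
          have hlen3 : (Word.cons (b * a) wmid hfst hba).toList.length ≤ n := by
            rw [hlist, hwmidList]
            simp only [List.length_cons]
            omega
          have hne3 : Word.cons (b * a) wmid hfst hba ≠ Word.empty := by
            intro hcon
            have := congrArg Word.toList hcon
            rw [hlist] at this
            simp [Word.empty] at this
          have hsq3 : (Word.cons (b * a) wmid hfst hba).prod *
              (Word.cons (b * a) wmid hfst hba).prod = 1 := by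
            rw [Word.prod_cons, ← hz]
            exact hzsq
          have := ih _ hlen3 hne3 hsq3
          rwa [Word.prod_cons, ← hz] at this
    · -- head and last in different factors : the square is nontrivial
      exfalso
      have hj : j ≠ i := fun h => hij h.symm
      apply neword_sq_ne_one hj nw
      rw [hprod, hsq]

end Torsion

lemma coprodI_involution {κ : Type*} {G : κ → Type*} [∀ i, Group (G i)] (x : Monoid.CoprodI G) (hne : x ≠ 1) (hsq : x * x = 1) :
    ∃ (t : Monoid.CoprodI G) (k : κ) (h : G k), h ≠ 1 ∧ h * h = 1 ∧
      t * x * t⁻¹ = Monoid.CoprodI.of h := by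
  classical
  open Monoid.CoprodI in
  set w := Word.equiv (M := G) x with hw
  have hx : w.prod = x := (Word.equiv (M := G)).symm_apply_apply x
  have hwne : w ≠ Word.empty := by
    intro h
    apply hne
    rw [← hx, h, Word.prod_empty]
  obtain ⟨t, k, h, hh, ht⟩ := torsion_main w.toList.length w le_rfl hwne (by
    rw [hx]; exact hsq)
  refine ⟨t, k, h, hh, ?_, by rwa [hx] at ht⟩
  apply Monoid.CoprodI.of_injective k
  rw [map_mul, map_one, ← ht]
  rw [hx]
  have : t * x * t⁻¹ * (t * x * t⁻¹) = t * (x * x) * t⁻¹ := by group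
  rw [this, hsq]
  group

------------------------------------------------------------------
-- a hyperbolic element does not square to 1
------------------------------------------------------------------

lemma hyperbolic_sq_ne_one {A : SL2R}
    (htr : 2 < |Matrix.trace ((A : SL2R) : Matrix (Fin 2) (Fin 2) ℝ)|) :
    psl A * psl A ≠ 1 := by
  intro hcon
  rw [← psl_mul, psl_eq_one_iff] at hcon
  set a := A.1 0 0 with ha
  set b := A.1 0 1 with hb
  set c := A.1 1 0 with hc
  set d := A.1 1 1 with hd
  have hdet : a * d - b * c = 1 := by
    have := A.2
    rwa [Matrix.det_fin_two] at this
  have htr' : 2 < |a + d| := by rwa [Matrix.trace_fin_two] at htr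
  have htrne : a + d ≠ 0 := by
    intro h
    rw [h] at htr'
    norm_num at htr'
  rcases hcon with hcon | hcon
  · have h4 : (A * A).1 = (1 : SL2R).1 := congrArg _ hcon
    have E00 : a * a + b * c = 1 := by
      have := congrFun (congrFun h4 0) 0
      simpa [Matrix.SpecialLinearGroup.coe_mul, Matrix.mul_apply, Fin.sum_univ_two,
        Matrix.SpecialLinearGroup.coe_one, Matrix.one_apply, ← ha, ← hb, ← hc, ← hd] using this
    have E01 : a * b + b * d = 0 := by
      have := congrFun (congrFun h4 0) 1
      simpa [Matrix.SpecialLinearGroup.coe_mul, Matrix.mul_apply, Fin.sum_univ_two,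
        Matrix.SpecialLinearGroup.coe_one, Matrix.one_apply, ← ha, ← hb, ← hc, ← hd] using this
    have E10 : c * a + d * c = 0 := by
      have := congrFun (congrFun h4 1) 0
      simpa [Matrix.SpecialLinearGroup.coe_mul, Matrix.mul_apply, Fin.sum_univ_two,
        Matrix.SpecialLinearGroup.coe_one, Matrix.one_apply, ← ha, ← hb, ← hc, ← hd] using this
    have hb0 : b = 0 := by
      rcases mul_eq_zero.1 (show b * (a + d) = 0 by linarith) with h | h
      · exact h
      · exact absurd h htrne
    have hc0 : c = 0 := by
      rcases mul_eq_zero.1 (show c * (a + d) = 0 by linarith) with h | h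
      · exact h
      · exact absurd h htrne
    rw [hb0, hc0] at hdet E00
    have h_ad : (a + d) ^ 2 = 4 := by nlinarith
    rcases abs_cases (a + d) with ⟨h1, _⟩ | ⟨h1, _⟩ <;> nlinarith
  · have h4 : (A * A).1 = ((-1 : SL2R)).1 := congrArg _ hcon
    have E00 : a * a + b * c = -1 := by
      have := congrFun (congrFun h4 0) 0
      simpa [Matrix.SpecialLinearGroup.coe_mul, Matrix.mul_apply, Fin.sum_univ_two,
        Matrix.SpecialLinearGroup.coe_neg, Matrix.SpecialLinearGroup.coe_one,
        Matrix.neg_apply, Matrix.one_apply, ← ha, ← hb, ← hc, ← hd] using this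
    have E11 : c * b + d * d = -1 := by
      have := congrFun (congrFun h4 1) 1
      simpa [Matrix.SpecialLinearGroup.coe_mul, Matrix.mul_apply, Fin.sum_univ_two,
        Matrix.SpecialLinearGroup.coe_neg, Matrix.SpecialLinearGroup.coe_one,
        Matrix.neg_apply, Matrix.one_apply, ← ha, ← hb, ← hc, ← hd] using this
    have : (a + d) ^ 2 = 0 := by nlinarith
    exact htrne (by nlinarith)

------------------------------------------------------------------
-- the unique involution in ZMod (2*m)
------------------------------------------------------------------

lemma zmod_involution {p m : ℕ} (hp : p = 2 * m) (hm : 1 ≤ m) (x : ZMod p)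
    (hx : x ≠ 0) (hsq : x + x = 0) : x.val = m := by
  haveI : NeZero p := ⟨by omega⟩
  have h1 : (x + x).val = 0 := by rw [hsq]; simp
  rw [ZMod.val_add] at h1
  have h2 : x.val < p := ZMod.val_lt x
  have h3 : x.val ≠ 0 := fun h => hx ((ZMod.val_eq_zero x).1 h)
  have h4 : (x.val + x.val) % p = 0 := h1
  have h5 : x.val + x.val < 2 * p := by omega
  rcases Nat.dvd_of_mod_eq_zero h4 with ⟨q, hq⟩
  match q, hq with
  | 0, hq => omega
  | 1, hq => omega
  | (q + 2), hq =>
    have hge : p * 2 ≤ p * (q + 2) := Nat.mul_le_mul_left p (by omega)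
    omega


open Monoid in
/-- For `p = 2m`, `m ≥ 2`, and a hyperbolic reciprocal `g ∈ Γ_p`, every
reciprocator of `g` is conjugate in `Γ_p` to `ι` or to `γ_p^m`. -/
theorem reciprocators_conj_iota_or_gamma (m : ℕ) (hm : 2 ≤ m) (p : ℕ) (hp : p = 2 * m)
    (g : PSL2R) (hg : g ∈ Hecke p) (hhyp : IsHyperbolic g)
    (hrec : ∃ h ∈ Hecke p, h * g * h⁻¹ = g⁻¹) :
    ∀ h ∈ Hecke p, h * g * h⁻¹ = g⁻¹ →
      ∃ t ∈ Hecke p, t * h * t⁻¹ = iota ∨ t * h * t⁻¹ = (gammaP p) ^ m := by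
  intro h hmem hcon
  have hp3 : 3 ≤ p := by omega
  obtain ⟨A, hA, htr⟩ := hhyp
  -- the reciprocator is nontrivial
  have hne : h ≠ 1 := by
    rintro rfl
    rw [one_mul, inv_one, mul_one] at hcon
    have hg1 : g * g = 1 := by
      nth_rewrite 2 [hcon]
      simp
    apply hyperbolic_sq_ne_one htr
    rw [hA]
    exact hg1
  -- the reciprocator is an involution
  obtain ⟨B, hB⟩ : ∃ B : SL2R, psl B = h := QuotientGroup.mk_surjective h
  have hBB : B * B = -1 := reciprocator_involution htr (by rw [hB, hA]; exact hcon)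
  have hinv : h * h = 1 := by
    rw [← hB, ← psl_mul, hBB]
    exact psl_eq_one_iff.2 (Or.inr rfl)
  -- move to the free product
  have hmem' : h ∈ (CoprodI.lift (ff hp3)).range := by
    rw [Phi_range hp3]
    exact hmem
  obtain ⟨y, hy⟩ := hmem'
  have hyne : y ≠ 1 := by
    rintro rfl
    rw [map_one] at hy
    exact hne hy.symm
  have hysq : y * y = 1 := Phi_injective hp3 (by rw [map_mul, hy, hinv, map_one])
  obtain ⟨t₀, k, h₀, hh₀, hh₀sq, ht₀⟩ := coprodI_involution y hyne hysq
  refine ⟨CoprodI.lift (ff hp3) t₀, ?_, ?_⟩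
  · rw [← Phi_range hp3]
    exact ⟨t₀, rfl⟩
  · have key : (CoprodI.lift (ff hp3) t₀) * h * (CoprodI.lift (ff hp3) t₀)⁻¹ =
        CoprodI.lift (ff hp3) (CoprodI.of h₀) := by
      rw [← hy, ← map_inv, ← map_mul, ← map_mul, ht₀]
    rw [key, CoprodI.lift_of, ff_apply]
    cases k
    · left
      obtain ⟨h1, h2⟩ := toAdd_val_pos hp3 hh₀
      have hval : (Multiplicative.toAdd h₀).val = 1 := by
        have := h2
        simp only [nn, cond_false] at this
        omega
      rw [hval, pow_one]
      rfl
    · right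
      have hadd : Multiplicative.toAdd h₀ + Multiplicative.toAdd h₀ = 0 := by
        have := congrArg Multiplicative.toAdd hh₀sq
        simpa using this
      have hne0 : Multiplicative.toAdd h₀ ≠ 0 := by
        intro hcon0
        apply hh₀
        have := congrArg Multiplicative.ofAdd hcon0
        simpa using this
      have hval : (Multiplicative.toAdd h₀).val = m :=
        zmod_involution hp (by omega) _ hne0 hadd
      rw [hval]
      rfl
end
end

section
/- Let p = 2m with m ≥ 2 an integer and let A be a hyperbolic element of the Hecke group Γ_p whose fixed-point ratio equals cos(π/p). Then A is reciprocal in Γ_p with reciprocator γ_p^m, i.e. γ_p^m * A * γ_p^{-m} = A⁻¹ in Γ_p. -/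
noncomputable section

lemma pow_M (θ : ℝ) (hs : Real.sin θ ≠ 0) (n : ℕ) :
    (!![0, -1; 1, 2 * Real.cos θ] : Matrix (Fin 2) (Fin 2) ℝ) ^ n =
      (Real.sin θ)⁻¹ • !![-Real.sin (((n : ℝ) - 1) * θ), -Real.sin (n * θ);
                           Real.sin (n * θ), Real.sin (((n : ℝ) + 1) * θ)] := by
  induction n with
  | zero =>
      ext i j
      fin_cases i <;> fin_cases j <;>
        simp [Matrix.smul_apply] <;>
        field_simp <;>
        simp [neg_mul, Real.sin_neg]
  | succ n ih =>
      rw [pow_succ, ih]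
      ext i j
      have h1 : ((n : ℝ) + 1 - 1) * θ = (n : ℝ) * θ := by ring
      have h2 : (((n : ℝ) + 1) + 1) * θ = ((n : ℝ) + 1) * θ + θ := by ring
      have h3 : ((n : ℝ) - 1) * θ = (n : ℝ) * θ - θ := by ring
      have h4 : ((n : ℝ) + 1) * θ = (n : ℝ) * θ + θ := by ring
      fin_cases i <;> fin_cases j <;>
        push_cast <;>
        simp [Matrix.mul_apply, Fin.sum_univ_two, Matrix.smul_apply, h1, h2, h3, h4,
          Real.sin_add, Real.sin_sub, Real.cos_add, Real.cos_sub] <;>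
        field_simp <;>
        (try ring) <;>
        (try linear_combination (Real.sin ((n:ℝ)*θ) * Real.sin θ^2) * Real.sin_sq_add_cos_sq θ) <;>
        (try linear_combination (Real.sin ((n:ℝ)*θ)) * Real.sin_sq_add_cos_sq θ)

/-- For `p = 2m`, `m ≥ 2`, a hyperbolic element of `Γ_p` with
fixed-point ratio `cos(π/p)` is reciprocal in `Γ_p` with reciprocator `γ_p^m`. -/
theorem theta_cos_implies_reciprocator_gamma (m : ℕ) (hm : 2 ≤ m) (p : ℕ) (hp : p = 2 * m)
    (A : PSL2R) (hA : A ∈ Hecke p) (hhyp : IsHyperbolic A)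
    (hθ : ∃ B : SL2R, psl B = A ∧ theta B = ((Real.cos (Real.pi / p) : ℝ) : WithTop ℝ)) :
    (gammaP p) ^ m * A * ((gammaP p) ^ m)⁻¹ = A⁻¹ := by
  obtain ⟨B, hB, hθB⟩ := hθ
  subst hp
  set θ' : ℝ := Real.pi / ((2 * m : ℕ) : ℝ) with hθ'def
  have hm4 : (4 : ℝ) ≤ ((2 * m : ℕ) : ℝ) := by
    push_cast
    have : (2 : ℝ) ≤ (m : ℝ) := by exact_mod_cast hm
    linarith
  have hθpos : 0 < θ' := by
    rw [hθ'def]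
    exact div_pos Real.pi_pos (by linarith)
  have hθlt : θ' < Real.pi := by
    rw [hθ'def, div_lt_iff₀ (by linarith : (0:ℝ) < ((2*m:ℕ):ℝ))]
    nlinarith [Real.pi_pos]
  have hsin : Real.sin θ' ≠ 0 := ne_of_gt (Real.sin_pos_of_pos_of_lt_pi hθpos hθlt)
  have hclt1 : Real.cos θ' < 1 := by
    have h := Real.cos_lt_cos_of_nonneg_of_le_pi (le_refl 0) hθlt.le hθpos
    simpa using h
  -- the key relation b - c = cos θ' * (a - d)
  have hbc : B.1 0 1 - B.1 1 0 = Real.cos θ' * (B.1 0 0 - B.1 1 1) := by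
    unfold theta at hθB
    split_ifs at hθB with h1 h2
    · exfalso
      have : (1 : ℝ) = Real.cos θ' := by exact_mod_cast hθB
      linarith
    · exact absurd hθB (by simp)
    · have h' : (B.1 0 1 - B.1 1 0) / (B.1 0 0 - B.1 1 1) = Real.cos θ' := by
        exact_mod_cast hθB
      rw [div_eq_iff (sub_ne_zero.mpr h1)] at h'
      linarith [h']
  -- the lift of γ^m
  set G : SL2R := (Sm * Tm (2 * m)) ^ m with hGdef
  have hST : ((Sm * Tm (2 * m) : SL2R) : Matrix (Fin 2) (Fin 2) ℝ) = !![0, -1; 1, 2 * Real.cos θ'] := by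
    rw [hθ'def]
    rw [Matrix.SpecialLinearGroup.coe_mul]
    ext i j
    fin_cases i <;> fin_cases j <;>
      simp [Sm, Tm, Matrix.SpecialLinearGroup.coe_mul, Matrix.mul_apply, Fin.sum_univ_two]
  have hmθ : (m : ℝ) * θ' = Real.pi / 2 := by
    rw [hθ'def]
    have hm0 : (m : ℝ) ≠ 0 := Nat.cast_ne_zero.mpr (by omega)
    push_cast
    field_simp
  have hGmat : (G : Matrix (Fin 2) (Fin 2) ℝ) =
      (Real.sin θ')⁻¹ • !![-Real.cos θ', -1; 1, Real.cos θ'] := by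
    have e1 : ((m : ℝ) - 1) * θ' = Real.pi / 2 - θ' := by rw [← hmθ]; ring
    have e2 : ((m : ℝ) + 1) * θ' = Real.pi / 2 + θ' := by rw [← hmθ]; ring
    have e3 : (m : ℝ) * θ' = Real.pi / 2 := hmθ
    rw [hGdef, Matrix.SpecialLinearGroup.coe_pow, hST, pow_M θ' hsin m, e1, e2, e3]
    simp [Real.sin_pi_div_two_sub, Real.sin_pi_div_two, Real.sin_add, Real.cos_pi_div_two]
  have hBinv : ((B⁻¹ : SL2R) : Matrix (Fin 2) (Fin 2) ℝ) =
      !![B.1 1 1, -B.1 0 1; -B.1 1 0, B.1 0 0] := by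
    rw [Matrix.SpecialLinearGroup.coe_inv, Matrix.adjugate_fin_two]
  have hBmat : ((B : SL2R) : Matrix (Fin 2) (Fin 2) ℝ) = !![B.1 0 0, B.1 0 1; B.1 1 0, B.1 1 1] := by
    ext i j; fin_cases i <;> fin_cases j <;> rfl
  have key : G * B = B⁻¹ * G := by
    apply Matrix.SpecialLinearGroup.ext
    intro i j
    have hc : ∀ (X Y : SL2R) (i j : Fin 2), (X * Y) i j =
        ((X : Matrix (Fin 2) (Fin 2) ℝ) * (Y : Matrix (Fin 2) (Fin 2) ℝ)) i j := by
      intro X Y i j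
      rw [Matrix.SpecialLinearGroup.coe_mul]
    have hb : B.1 0 1 = Real.cos θ' * (B.1 0 0 - B.1 1 1) + B.1 1 0 := by linarith
    rw [hc, hc, hGmat, hBinv, hBmat, hb]
    fin_cases i <;> fin_cases j <;>
      simp [Matrix.mul_apply, Fin.sum_univ_two, Matrix.smul_apply] <;>
      field_simp <;>
      ring
  have key2 : G * B * G⁻¹ = B⁻¹ := by
    rw [key, mul_assoc, mul_inv_cancel, mul_one]
  have hpow : (gammaP (2 * m)) ^ m = psl G := by
    rw [hGdef]
    show (psl (Sm * Tm (2 * m))) ^ m = _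
    exact (QuotientGroup.mk_pow _ _ _).symm
  rw [hpow, ← hB]
  show psl G * psl B * (psl G)⁻¹ = (psl B)⁻¹
  have : psl G * psl B * (psl G)⁻¹ = psl (G * B * G⁻¹) := by
    unfold psl
    rw [QuotientGroup.mk_mul, QuotientGroup.mk_mul, QuotientGroup.mk_inv]
  rw [this, key2]
  rfl
end
end

section
/- Let p = 2m with m ≥ 2 an integer and let g be a hyperbolic element of the Hecke group Γ_p that is reciprocal in Γ_p with some reciprocator h ∈ Γ_p conjugate in Γ_p to γ_p^m. Then g is conjugate in Γ_p to an element whose fixed-point ratio is cos(π/p) or 1: there exists t ∈ Γ_p such that a lift [[a,b],[c,d]] ∈ SL(2,ℝ) of t*g*t⁻¹ satisfies either a ≠ d and (b-c)/(a-d) = cos(π/p), or a = d and b = c. -/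
noncomputable section

lemma sin_step (θ x : ℝ) : 2 * Real.cos θ * Real.sin x - Real.sin (x - θ) = Real.sin (x + θ) := by
  rw [Real.sin_add, Real.sin_sub]; ring

set_option maxHeartbeats 1000000 in
lemma pow_entries (p : ℕ) (k : ℕ) :
    Real.sin (Real.pi / p) • (((Sm * Tm p) ^ (k+1) : SL2R) : Matrix (Fin 2) (Fin 2) ℝ) =
    !![-Real.sin (k * (Real.pi / p)), -Real.sin ((k+1) * (Real.pi / p));
       Real.sin ((k+1) * (Real.pi / p)), Real.sin ((k+2) * (Real.pi / p))] := by
  set θ := Real.pi / p with hθ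
  induction k with
  | zero =>
      have h1 : ((Sm * Tm p : SL2R) : Matrix (Fin 2) (Fin 2) ℝ) = !![0, -1; 1, 2 * Real.cos θ] := by
        rw [Matrix.SpecialLinearGroup.coe_mul]; simp [Sm, Tm, Matrix.mul_fin_two, hθ]
      rw [pow_one, h1]
      ext i j
      fin_cases i <;> fin_cases j <;>
        simp [Real.sin_two_mul] <;> push_cast <;> ring_nf <;>
        simp [Real.sin_two_mul] <;> ring
  | succ k ih =>
      have h1 : ((Sm * Tm p : SL2R) : Matrix (Fin 2) (Fin 2) ℝ) = !![0, -1; 1, 2 * Real.cos θ] := by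
        rw [Matrix.SpecialLinearGroup.coe_mul]; simp [Sm, Tm, Matrix.mul_fin_two, hθ]
      have h2 : (((Sm * Tm p) ^ (k+2) : SL2R) : Matrix (Fin 2) (Fin 2) ℝ)
          = (((Sm * Tm p) ^ (k+1) : SL2R) : Matrix (Fin 2) (Fin 2) ℝ) * !![0, -1; 1, 2 * Real.cos θ] := by
        rw [← h1, ← Matrix.SpecialLinearGroup.coe_mul, pow_succ]
      rw [h2, ← smul_mul_assoc, ih, Matrix.mul_fin_two]
      have hA := sin_step θ (((k:ℝ)+2)*θ)
      have hB := sin_step θ (((k:ℝ)+1)*θ)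
      rw [show ((k:ℝ)+2)*θ-θ = ((k:ℝ)+1)*θ by ring,
          show ((k:ℝ)+2)*θ+θ = ((k:ℝ)+1+2)*θ by ring] at hA
      rw [show ((k:ℝ)+1)*θ-θ = (k:ℝ)*θ by ring,
          show ((k:ℝ)+1)*θ+θ = ((k:ℝ)+1+1)*θ by ring] at hB
      ext i j
      fin_cases i <;> fin_cases j <;> simp <;> push_cast <;>
        first
          | linear_combination hA
          | linear_combination -hB
          | (rw [show ((k:ℝ)+1+1) = ((k:ℝ)+2) by ring])

/-- For `p = 2m`, `m ≥ 2`: if a hyperbolic reciprocal `g ∈ Γ_p` has a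
reciprocator conjugate in `Γ_p` to `γ_p^m`, then `g` is conjugate in `Γ_p` to an element
whose fixed-point ratio is `cos(π/p)` or `1` (lift with `a ≠ d`, `(b-c)/(a-d) = cos(π/p)`,
or with `a = d` and `b = c`). -/
theorem conj_to_cos_or_one_ratio (m : ℕ) (hm : 2 ≤ m) (p : ℕ) (hp : p = 2 * m)
    (g : PSL2R) (hg : g ∈ Hecke p) (hhyp : IsHyperbolic g)
    (h : PSL2R) (hh : h ∈ Hecke p) (hrec : h * g * h⁻¹ = g⁻¹)
    (hconj : ∃ s ∈ Hecke p, s * h * s⁻¹ = (gammaP p) ^ m) :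
    ∃ t ∈ Hecke p, ∃ B : SL2R, psl B = t * g * t⁻¹ ∧
      ((B.1 0 0 ≠ B.1 1 1 ∧
          (B.1 0 1 - B.1 1 0) / (B.1 0 0 - B.1 1 1) = Real.cos (Real.pi / p)) ∨
        (B.1 0 0 = B.1 1 1 ∧ B.1 0 1 = B.1 1 0)) := by
  obtain ⟨s0, hs0mem, hs0⟩ := hconj
  obtain ⟨A, hA, hAtr⟩ := hhyp
  obtain ⟨T0, hT0⟩ := QuotientGroup.mk_surjective s0
  set θ := Real.pi / p with hθdef
  have hm0 : (m : ℝ) ≠ 0 := by positivity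
  have hmθ : (m : ℝ) * θ = Real.pi / 2 := by
    rw [hθdef, hp]; push_cast; field_simp
  -- the matrix J = (S T)^m and its scaled entries
  set J : SL2R := (Sm * Tm p) ^ m with hJdef
  have hJ : Real.sin θ • (J : Matrix (Fin 2) (Fin 2) ℝ) =
      !![-Real.cos θ, -1; 1, Real.cos θ] := by
    have hk : m - 1 + 1 = m := Nat.sub_add_cancel (le_trans one_le_two hm)
    have := pow_entries p (m - 1)
    rw [hk] at this
    have hc : ((m - 1 : ℕ) : ℝ) = (m : ℝ) - 1 := by
      push_cast [Nat.cast_sub (le_trans one_le_two hm)]; ring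
    rw [hc] at this
    rw [hJdef, this]
    have e1 : ((m:ℝ) - 1) * θ = Real.pi/2 - θ := by rw [← hmθ]; ring
    have e2 : ((m:ℝ) - 1 + 1) * θ = Real.pi/2 := by rw [← hmθ]; ring
    have e3 : ((m:ℝ) - 1 + 2) * θ = Real.pi/2 + θ := by rw [← hmθ]; ring
    rw [e1, e2, e3, Real.sin_pi_div_two_sub, Real.sin_pi_div_two]
    congr 1
    rw [Real.sin_add, Real.sin_pi_div_two, Real.cos_pi_div_two]; ring
  -- B, a lift of s0 * g * s0⁻¹ with the same trace as A
  set B : SL2R := T0 * A * T0⁻¹ with hBdef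
  have hpslB : psl B = s0 * g * s0⁻¹ := by
    simp only [hBdef, psl, QuotientGroup.mk_mul, QuotientGroup.mk_inv]
    rw [show (QuotientGroup.mk T0 : PSL2R) = s0 from hT0, show (QuotientGroup.mk A : PSL2R) = g from hA]
  have htrB : Matrix.trace (B : Matrix (Fin 2) (Fin 2) ℝ)
      = Matrix.trace (A : Matrix (Fin 2) (Fin 2) ℝ) := by
    have : (B : Matrix (Fin 2) (Fin 2) ℝ)
        = (T0 : Matrix (Fin 2) (Fin 2) ℝ) * A * (T0⁻¹ : SL2R) := by
      simp [hBdef]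
    rw [this, Matrix.trace_mul_cycle]
    have : ((T0⁻¹ : SL2R) : Matrix (Fin 2) (Fin 2) ℝ) * T0 = 1 := by
      rw [← Matrix.SpecialLinearGroup.coe_mul, inv_mul_cancel,
        Matrix.SpecialLinearGroup.coe_one]
    rw [this, one_mul]
  have htrne : Matrix.trace (B : Matrix (Fin 2) (Fin 2) ℝ) ≠ 0 := by
    rw [htrB]; intro hc; rw [hc] at hAtr; simp at hAtr; linarith
  -- the key relation in PSL2R
  have hγ : (gammaP p) ^ m = psl J := by
    rw [hJdef, gammaP]
    exact (map_pow (QuotientGroup.mk' (Subgroup.center SL2R)) (Sm * Tm p) m).symm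
  have hmain : psl J * psl B * (psl J)⁻¹ = (psl B)⁻¹ := by
    rw [hpslB, ← hγ, ← hs0]
    calc (s0*h*s0⁻¹) * (s0*g*s0⁻¹) * (s0*h*s0⁻¹)⁻¹
        = s0 * (h*g*h⁻¹) * s0⁻¹ := by group
      _ = s0 * g⁻¹ * s0⁻¹ := by rw [hrec]
      _ = (s0*g*s0⁻¹)⁻¹ := by group
  have hkey : (QuotientGroup.mk (J * B * J⁻¹) : PSL2R) = QuotientGroup.mk (B⁻¹) := by
    simpa [psl, QuotientGroup.mk_mul, QuotientGroup.mk_inv] using hmain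
  have hcen : (J * B * J⁻¹)⁻¹ * B⁻¹ ∈ Subgroup.center SL2R := QuotientGroup.eq.mp hkey
  obtain ⟨r, hr1, hr2⟩ := Matrix.SpecialLinearGroup.mem_center_iff.mp hcen
  have hr1' : r * r = 1 := by
    have : r ^ (2:ℕ) = 1 := by simpa [Fintype.card_fin] using hr1
    rw [pow_two] at this; exact this
  have hZ : (((J * B * J⁻¹)⁻¹ * B⁻¹ : SL2R) : Matrix (Fin 2) (Fin 2) ℝ)
      = r • (1 : Matrix (Fin 2) (Fin 2) ℝ) := by
    rw [← hr2]; ext i j; simp [Matrix.scalar_apply, Matrix.smul_apply, Matrix.one_apply,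
      Matrix.diagonal_apply]
  -- express B⁻¹ in terms of conjugation by J
  have hBinv : ((B⁻¹ : SL2R) : Matrix (Fin 2) (Fin 2) ℝ)
      = r • ((J : Matrix (Fin 2) (Fin 2) ℝ) * (B : Matrix (Fin 2) (Fin 2) ℝ) * ((J⁻¹ : SL2R) : Matrix (Fin 2) (Fin 2) ℝ)) := by
    have : (B⁻¹ : SL2R) = (J * B * J⁻¹) * ((J * B * J⁻¹)⁻¹ * B⁻¹) := by group
    rw [this, Matrix.SpecialLinearGroup.coe_mul, hZ]
    simp [Matrix.SpecialLinearGroup.coe_mul, mul_smul_comm]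
  -- traces force r = 1
  have htrBinv : Matrix.trace ((B⁻¹ : SL2R) : Matrix (Fin 2) (Fin 2) ℝ)
      = Matrix.trace (B : Matrix (Fin 2) (Fin 2) ℝ) := by
    rw [Matrix.SpecialLinearGroup.SL2_inv_expl, Matrix.trace_fin_two]
    simp [Matrix.trace_fin_two]
    ring
  have htrconj : Matrix.trace ((J : Matrix (Fin 2) (Fin 2) ℝ) * (B : Matrix (Fin 2) (Fin 2) ℝ) * ((J⁻¹ : SL2R) : Matrix (Fin 2) (Fin 2) ℝ))
      = Matrix.trace (B : Matrix (Fin 2) (Fin 2) ℝ) := by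
    rw [Matrix.trace_mul_cycle]
    have : ((J⁻¹ : SL2R) : Matrix (Fin 2) (Fin 2) ℝ) * J = 1 := by
      rw [← Matrix.SpecialLinearGroup.coe_mul, inv_mul_cancel,
        Matrix.SpecialLinearGroup.coe_one]
    rw [this, one_mul]
  have hr : r = 1 := by
    have h1 : Matrix.trace (B : Matrix (Fin 2) (Fin 2) ℝ)
        = r * Matrix.trace (B : Matrix (Fin 2) (Fin 2) ℝ) := by
      calc Matrix.trace (B : Matrix (Fin 2) (Fin 2) ℝ)
          = Matrix.trace ((B⁻¹ : SL2R) : Matrix (Fin 2) (Fin 2) ℝ) := htrBinv.symm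
        _ = r * Matrix.trace ((J : Matrix (Fin 2) (Fin 2) ℝ) * (B : Matrix (Fin 2) (Fin 2) ℝ) * ((J⁻¹ : SL2R) : Matrix (Fin 2) (Fin 2) ℝ)) := by
            rw [hBinv, Matrix.trace_smul, smul_eq_mul]
        _ = r * Matrix.trace (B : Matrix (Fin 2) (Fin 2) ℝ) := by rw [htrconj]
    rcases mul_self_eq_one_iff.mp hr1' with h | h
    · exact h
    · exfalso; rw [h] at h1; apply htrne; linarith
  -- hence J B J⁻¹ = B⁻¹ exactly, i.e. J B = B⁻¹ J
  have hJB : (J : Matrix (Fin 2) (Fin 2) ℝ) * B = ((B⁻¹ : SL2R) : Matrix (Fin 2) (Fin 2) ℝ) * J := by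
    have h0 : (J * B * J⁻¹ : SL2R) = B⁻¹ := by
      have : ((J * B * J⁻¹)⁻¹ * B⁻¹ : SL2R) = 1 := by
        apply Subtype.ext
        rw [hZ, hr]; simp
      group at this ⊢
      -- from (J B J⁻¹)⁻¹ B⁻¹ = 1
      have h2 := congrArg (fun x => (J * B * J⁻¹) * x) this
      simpa [mul_assoc] using h2.symm
    calc (J : Matrix (Fin 2) (Fin 2) ℝ) * B
        = ((J * B : SL2R) : Matrix (Fin 2) (Fin 2) ℝ) := by
          simp [Matrix.SpecialLinearGroup.coe_mul]
      _ = ((B⁻¹ * J : SL2R) : Matrix (Fin 2) (Fin 2) ℝ) := by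
          congr 1
          calc (J * B : SL2R) = (J * B * J⁻¹) * J := by group
            _ = B⁻¹ * J := by rw [h0]
      _ = ((B⁻¹ : SL2R) : Matrix (Fin 2) (Fin 2) ℝ) * J := by
          simp [Matrix.SpecialLinearGroup.coe_mul]
  -- scale by sin θ and use explicit entries
  have hscaled : !![-Real.cos θ, -1; 1, Real.cos θ] * (B : Matrix (Fin 2) (Fin 2) ℝ)
      = ((B⁻¹ : SL2R) : Matrix (Fin 2) (Fin 2) ℝ) * !![-Real.cos θ, -1; 1, Real.cos θ] := by
    rw [← hJ, smul_mul_assoc, mul_smul_comm, hJB]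
  have hentry := congrFun (congrFun hscaled 0) 0
  set a := (B : Matrix (Fin 2) (Fin 2) ℝ) 0 0
  set b := (B : Matrix (Fin 2) (Fin 2) ℝ) 0 1
  set c := (B : Matrix (Fin 2) (Fin 2) ℝ) 1 0
  set d := (B : Matrix (Fin 2) (Fin 2) ℝ) 1 1
  have hBi : ((B⁻¹ : SL2R) : Matrix (Fin 2) (Fin 2) ℝ) = !![d, -b; -c, a] := by
    rw [Matrix.SpecialLinearGroup.SL2_inv_expl]
    ext i j; fin_cases i <;> fin_cases j <;> simp <;> rfl
  rw [hBi] at hentry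
  have heq : b - c = Real.cos θ * (a - d) := by
    simp [Matrix.mul_apply, Fin.sum_univ_two] at hentry
    linarith
  refine ⟨s0, hs0mem, B, ?_, ?_⟩
  · exact hpslB
  · by_cases had : a = d
    · right
      constructor
      · exact had
      · have : b - c = 0 := by rw [heq, had]; ring
        linarith
    · left
      refine ⟨had, ?_⟩
      rw [heq]
      exact mul_div_cancel_right₀ _ (sub_ne_zero.mpr had)
end
end
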